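/- arXiv:2304.07868 — 11 statements merged into one kernel-verified Lean document; each statement's English description precedes it below -/
import Mathlib

section
/- Let A and B be m×n real matrices. Then AAᵀ = BBᵀ and AᵀA = BᵀB if and only if there exist orthogonal matrices U₁, U₂ (m×m) and V (n×n), and a rectangular diagonal matrix Σ of singular values, such that A = U₁ Σ Vᵀ, B = U₂ Σ Vᵀ, and U₂ᵀU₁ commutes with ΣΣᵀ. -/
/-!
If `AᵀA = BᵀB = V diag(μ) Vᵀ`, with the eigenvalues `μ` sorted decreasingly (so that at most `m`
of them, the rank of `A`, are nonzero), then `A`, `B` and `Σ Vᵀ`, where `Σ` is the rectangular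
diagonal matrix of the `√μ j`, all have the same Gram matrix. Matrices with the same Gram matrix
differ by an orthogonal left factor, because `N x ↦ M x` is then a well-defined isometry of the
column space of `N`, which extends to the whole space. Hence `A = U₁ Σ Vᵀ` and `B = U₂ Σ Vᵀ`, and
`AAᵀ = U₁ ΣΣᵀ U₁ᵀ` equals `BBᵀ = U₂ ΣΣᵀ U₂ᵀ` exactly when `U₂ᵀ U₁` commutes with `ΣΣᵀ`.
-/

open Matrix

section CommRing

variable {R ι κ : Type*} [CommRing R] [Fintype ι] [Fintype κ]

theorem Matrix.conj_eq_conj_iff_commute [DecidableEq ι] {U₁ U₂ S : Matrix ι ι R}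
    (h₁ : U₁ᵀ * U₁ = 1) (h₂ : U₂ᵀ * U₂ = 1) :
    U₁ * S * U₁ᵀ = U₂ * S * U₂ᵀ ↔ Commute (U₂ᵀ * U₁) S := by
  have h₁' : U₁ * U₁ᵀ = 1 := mul_eq_one_comm.mp h₁
  have h₂' : U₂ * U₂ᵀ = 1 := mul_eq_one_comm.mp h₂
  constructor
  · intro h
    calc U₂ᵀ * U₁ * S = U₂ᵀ * (U₁ * S * U₁ᵀ) * U₁ := by
          simp only [Matrix.mul_assoc, h₁, Matrix.mul_one]
      _ = S * (U₂ᵀ * U₁) := by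
          rw [h]; simp only [← Matrix.mul_assoc, h₂, Matrix.one_mul]
  · intro h
    calc U₁ * S * U₁ᵀ = U₂ * (U₂ᵀ * U₁ * S) * U₁ᵀ := by
          simp only [← Matrix.mul_assoc, h₂', Matrix.one_mul]
      _ = U₂ * S * U₂ᵀ := by
          rw [h.eq]; simp only [Matrix.mul_assoc, h₁', Matrix.mul_one]

theorem Matrix.mul_transpose_self_eq_conj [DecidableEq κ] (U : Matrix ι ι R) (D : Matrix ι κ R)
    {V : Matrix κ κ R} (hV : Vᵀ * V = 1) :
    U * D * Vᵀ * (U * D * Vᵀ)ᵀ = U * (D * Dᵀ) * Uᵀ := by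
  simp only [transpose_mul, transpose_transpose, Matrix.mul_assoc]
  rw [← Matrix.mul_assoc Vᵀ, hV, Matrix.one_mul]

theorem Matrix.transpose_mul_self_eq_conj [DecidableEq ι] {U : Matrix ι ι R} (hU : Uᵀ * U = 1)
    (D : Matrix ι κ R) (V : Matrix κ κ R) :
    (U * D * Vᵀ)ᵀ * (U * D * Vᵀ) = V * (Dᵀ * D) * Vᵀ := by
  simp only [transpose_mul, transpose_transpose, Matrix.mul_assoc]
  rw [← Matrix.mul_assoc Uᵀ, hU, Matrix.one_mul]

end CommRing

theorem LinearMap.exists_linearIsometry_comp_eq {𝕜 E V : Type*} [RCLike 𝕜] [AddCommGroup E]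
    [Module 𝕜 E] [NormedAddCommGroup V] [InnerProductSpace 𝕜 V] [FiniteDimensional 𝕜 V]
    (f g : E →ₗ[𝕜] V) (h : ∀ x, ‖f x‖ = ‖g x‖) :
    ∃ u : V →ₗᵢ[𝕜] V, u.toLinearMap ∘ₗ g = f := by
  have hker : ker g ≤ ker f := fun x hx => by
    rw [mem_ker, ← norm_eq_zero, h, norm_eq_zero]; exact hx
  let L : range g →ₗ[𝕜] V := (ker g).liftQ f hker ∘ₗ g.quotKerEquivRange.symm.toLinearMap
  have hL : ∀ x, L ⟨g x, mem_range_self g x⟩ = f x := fun x => by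
    simp [L, quotKerEquivRange_symm_apply_image]
  let Li : range g →ₗᵢ[𝕜] V := ⟨L, by rintro ⟨_, x, rfl⟩; simp [hL, h]⟩
  exact ⟨Li.extend,
    LinearMap.ext fun x => (Li.extend_apply ⟨g x, mem_range_self g x⟩).trans (hL x)⟩

section RCLike

variable {𝕜 ι κ : Type*} [RCLike 𝕜] [Fintype ι] [Fintype κ] [DecidableEq ι] [DecidableEq κ]

theorem Matrix.norm_toEuclideanLin_eq_of_conjTranspose_mul_self_eq {M N : Matrix ι κ 𝕜}
    (h : Mᴴ * M = Nᴴ * N) (x : EuclideanSpace 𝕜 κ) :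
    ‖M.toEuclideanLin x‖ = ‖N.toEuclideanLin x‖ := by
  have norm_sq : ∀ P : Matrix ι κ 𝕜,
      ‖P.toEuclideanLin x‖ ^ 2 = RCLike.re (inner 𝕜 x ((Pᴴ * P).toEuclideanLin x)) := by
    intro P
    rw [← inner_self_eq_norm_sq (𝕜 := 𝕜), ← LinearMap.adjoint_inner_right,
      ← toEuclideanLin_conjTranspose_eq_adjoint, toLpLin_mul_same]
    rfl
  have hM := norm_sq M
  rw [h, ← norm_sq N] at hM
  exact (sq_eq_sq₀ (norm_nonneg _) (norm_nonneg _)).mp hM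

theorem Matrix.exists_mem_unitaryGroup_mul_eq_of_conjTranspose_mul_self_eq {M N : Matrix ι κ 𝕜}
    (h : Mᴴ * M = Nᴴ * N) : ∃ U ∈ unitaryGroup ι 𝕜, M = U * N := by
  obtain ⟨u, hu⟩ := LinearMap.exists_linearIsometry_comp_eq _ _
    (norm_toEuclideanLin_eq_of_conjTranspose_mul_self_eq h)
  refine ⟨toEuclideanLin.symm u.toLinearMap, ?_, toEuclideanLin.injective ?_⟩
  · rw [mem_unitaryGroup_iff', star_eq_conjTranspose]
    apply toEuclideanLin.injective
    rw [toLpLin_mul_same, toEuclideanLin_conjTranspose_eq_adjoint]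
    simp
  · rw [toLpLin_mul_same]
    simpa using hu.symm

theorem Matrix.IsHermitian.exists_antitone_spectral {n : ℕ} {G : Matrix (Fin n) (Fin n) 𝕜}
    (hG : G.IsHermitian) :
    ∃ V ∈ unitaryGroup (Fin n) 𝕜, ∃ σ : Equiv.Perm (Fin n), Antitone (hG.eigenvalues ∘ σ) ∧
      G = V * diagonal (RCLike.ofReal ∘ hG.eigenvalues ∘ σ) * star V := by
  set W := (hG.eigenvectorUnitary : Matrix (Fin n) (Fin n) 𝕜)
  set σ := Tuple.sort (OrderDual.toDual ∘ hG.eigenvalues)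
  refine ⟨W.submatrix id σ, ?_, σ,
    monotone_toDual_comp_iff.mp (Tuple.monotone_sort (OrderDual.toDual ∘ hG.eigenvalues)), ?_⟩
  · rw [mem_unitaryGroup_iff', star_eq_conjTranspose, conjTranspose_submatrix,
      ← submatrix_mul _ _ _ _ _ Function.bijective_id, ← star_eq_conjTranspose,
      mem_unitaryGroup_iff'.mp hG.eigenvectorUnitary.2, submatrix_one_equiv]
  · rw [star_eq_conjTranspose, conjTranspose_submatrix, ← Function.comp_assoc,
      ← submatrix_diagonal_equiv, submatrix_mul_equiv, submatrix_mul_equiv, submatrix_id_id,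
      ← star_eq_conjTranspose]
    exact hG.spectral_theorem

end RCLike

theorem Fin.eq_zero_of_antitone_of_card_ne_zero_le {α : Type*} [PartialOrder α] [Zero α]
    [DecidableEq α] {n m : ℕ} {f : Fin n → α} (hf : Antitone f) (hf0 : ∀ j, 0 ≤ f j)
    (hcard : Fintype.card {j // f j ≠ 0} ≤ m) {j : Fin n} (hj : m ≤ j) : f j = 0 := by
  by_contra hfj
  have hsub : Finset.Iic j ⊆ Finset.univ.filter (f · ≠ 0) := fun k hk => by
    simp only [Finset.mem_filter, Finset.mem_univ, true_and]
    exact fun hk0 => hfj (le_antisymm (hk0 ▸ hf (Finset.mem_Iic.mp hk)) (hf0 j))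
  have hle := Finset.card_le_card hsub
  rw [Fin.card_Iic, ← Fintype.card_subtype] at hle
  omega

/-- The `m × n` matrix with `d j` in position `(j, j)`; the `d j` with `m ≤ j` are dropped. -/
def Matrix.rectDiagonal {α : Type*} [Zero α] (m : ℕ) {n : ℕ} (d : Fin n → α) :
    Matrix (Fin m) (Fin n) α :=
  of fun i j => if (i : ℕ) = j then d j else 0

theorem Matrix.rectDiagonal_apply {α : Type*} [Zero α] {m n : ℕ} (d : Fin n → α) (i : Fin m)
    (j : Fin n) :
    rectDiagonal m d i j = if (i : ℕ) = j then d j else 0 := rfl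

theorem Matrix.rectDiagonal_transpose_mul_self {α : Type*} [Semiring α] {m n : ℕ} {d : Fin n → α}
    (hd : ∀ j : Fin n, m ≤ (j : ℕ) → d j = 0) :
    (rectDiagonal m d)ᵀ * rectDiagonal m d = diagonal fun j => d j * d j := by
  ext j k
  rw [mul_apply, diagonal_apply]
  simp only [transpose_apply, rectDiagonal_apply]
  by_cases hj : (j : ℕ) < m
  · rw [Finset.sum_eq_single ⟨j, hj⟩]
    · by_cases hjk : j = k
      · subst hjk; simp
      · simp [hjk, Fin.val_ne_of_ne hjk]
    · intro i _ hi
      simp [show (i : ℕ) ≠ j from fun h => hi (Fin.ext h)]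
    · simp
  · rw [hd j (not_lt.mp hj)]
    simp

theorem Matrix.exists_transpose_mul_self_eq_diagonal {m n : ℕ} (A : Matrix (Fin m) (Fin n) ℝ) :
    ∃ (V : Matrix (Fin n) (Fin n) ℝ) (μ : Fin n → ℝ), Vᵀ * V = 1 ∧ (∀ j, 0 ≤ μ j) ∧
      (∀ j : Fin n, m ≤ (j : ℕ) → μ j = 0) ∧ Aᵀ * A = V * diagonal μ * Vᵀ := by
  have hG : (Aᵀ * A).PosSemidef := by simpa using posSemidef_conjTranspose_mul_self A
  obtain ⟨V, hV, σ, hanti, hspec⟩ := hG.isHermitian.exists_antitone_spectral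
  have hcard : Fintype.card {j // hG.isHermitian.eigenvalues (σ j) ≠ 0} ≤ m := by
    calc _ = Fintype.card {i // hG.isHermitian.eigenvalues i ≠ 0} :=
          Fintype.card_congr (σ.subtypeEquiv fun _ => Iff.rfl)
      _ = (Aᵀ * A).rank := hG.isHermitian.rank_eq_card_non_zero_eigs.symm
      _ ≤ m := by simpa [rank_transpose_mul_self] using A.rank_le_card_height
  refine ⟨V, hG.isHermitian.eigenvalues ∘ σ, ?_, fun j => hG.eigenvalues_nonneg _,
    fun j hj => Fin.eq_zero_of_antitone_of_card_ne_zero_le hanti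
      (fun _ => hG.eigenvalues_nonneg _) hcard hj, ?_⟩
  · simpa [star_eq_conjTranspose] using mem_unitaryGroup_iff'.mp hV
  · simpa [star_eq_conjTranspose] using hspec

theorem Matrix.exists_eq_mul_rectDiagonal_mul_transpose {m n : ℕ} {A : Matrix (Fin m) (Fin n) ℝ}
    {V : Matrix (Fin n) (Fin n) ℝ} {μ : Fin n → ℝ} (hμ : ∀ j, 0 ≤ μ j)
    (hμm : ∀ j : Fin n, m ≤ (j : ℕ) → μ j = 0) (hA : Aᵀ * A = V * diagonal μ * Vᵀ) :
    ∃ U : Matrix (Fin m) (Fin m) ℝ, Uᵀ * U = 1 ∧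
      A = U * rectDiagonal m (fun j => √(μ j)) * Vᵀ := by
  set D := rectDiagonal m fun j => √(μ j)
  have hD : Dᵀ * D = diagonal μ := by
    rw [rectDiagonal_transpose_mul_self fun j hj => by simp [hμm j hj]]
    simp only [Real.mul_self_sqrt (hμ _)]
  have hgram : Aᴴ * A = (D * Vᵀ)ᴴ * (D * Vᵀ) := by
    simp only [conjTranspose_eq_transpose_of_trivial, transpose_mul, transpose_transpose, hA]
    rw [Matrix.mul_assoc V Dᵀ, ← Matrix.mul_assoc Dᵀ, hD, Matrix.mul_assoc]
  obtain ⟨U, hU, hAU⟩ := exists_mem_unitaryGroup_mul_eq_of_conjTranspose_mul_self_eq hgram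
  exact ⟨U, (mem_orthogonalGroup_iff' _ _).mp hU, by rw [hAU, Matrix.mul_assoc]⟩

theorem stmt1 (m n : ℕ) (A B : Matrix (Fin m) (Fin n) ℝ) :
    (A * Aᵀ = B * Bᵀ ∧ Aᵀ * A = Bᵀ * B) ↔
    ∃ (U₁ U₂ : Matrix (Fin m) (Fin m) ℝ) (V : Matrix (Fin n) (Fin n) ℝ)
      (D : Matrix (Fin m) (Fin n) ℝ),
      (U₁ * U₁ᵀ = 1 ∧ U₁ᵀ * U₁ = 1) ∧ (U₂ * U₂ᵀ = 1 ∧ U₂ᵀ * U₂ = 1) ∧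
      (V * Vᵀ = 1 ∧ Vᵀ * V = 1) ∧
      (∀ (i : Fin m) (j : Fin n), (i : ℕ) ≠ (j : ℕ) → D i j = 0) ∧ (∀ i j, 0 ≤ D i j) ∧
      A = U₁ * D * Vᵀ ∧ B = U₂ * D * Vᵀ ∧
      (U₂ᵀ * U₁) * (D * Dᵀ) = (D * Dᵀ) * (U₂ᵀ * U₁) := by
  constructor
  · rintro ⟨hrow, hcol⟩
    obtain ⟨V, μ, hV, hμ, hμm, hA⟩ := exists_transpose_mul_self_eq_diagonal A
    obtain ⟨U₁, hU₁, rfl⟩ := exists_eq_mul_rectDiagonal_mul_transpose hμ hμm hA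
    obtain ⟨U₂, hU₂, rfl⟩ := exists_eq_mul_rectDiagonal_mul_transpose hμ hμm (hcol ▸ hA)
    refine ⟨U₁, U₂, V, rectDiagonal m fun j => √(μ j), ⟨mul_eq_one_comm.mp hU₁, hU₁⟩,
      ⟨mul_eq_one_comm.mp hU₂, hU₂⟩, ⟨mul_eq_one_comm.mp hV, hV⟩,
      fun i j hij => (rectDiagonal_apply ..).trans (if_neg hij), fun i j => ?_, rfl, rfl, ?_⟩
    · rw [rectDiagonal_apply]; split_ifs <;> simp
    · refine (conj_eq_conj_iff_commute hU₁ hU₂).mp ?_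
      rwa [mul_transpose_self_eq_conj _ _ hV, mul_transpose_self_eq_conj _ _ hV] at hrow
  · rintro ⟨U₁, U₂, V, D, ⟨-, hU₁⟩, ⟨-, hU₂⟩, ⟨-, hV⟩, -, -, rfl, rfl, hcomm⟩
    refine ⟨?_, ?_⟩
    · rw [mul_transpose_self_eq_conj _ _ hV, mul_transpose_self_eq_conj _ _ hV]
      exact (conj_eq_conj_iff_commute hU₁ hU₂).mpr hcomm
    · rw [transpose_mul_self_eq_conj hU₁, transpose_mul_self_eq_conj hU₂]
end

section
/- Let E be a (0,1,−1) matrix with zero row sums and zero column sums, and suppose A and A+E are Gram mates (i.e., A and A+E are (0,1) matrices with AAᵀ = (A+E)(A+E)ᵀ, AᵀA = (A+E)ᵀ(A+E), and E ≠ 0). Then for every vector x in the row space of E, Ax lies in the column space of E, and for every vector y in the column space of E, Aᵀy lies in the row space of E. -/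
/-! Expanding `(A + E)(A + E)ᵀ = AAᵀ` gives `AEᵀ = -E(A + E)ᵀ`, so `A` sends every row
combination `Eᵀv` of `E` to the column combination `E(-(A + E)ᵀv)`. The second claim is the
first one for the transposed pair `Aᵀ, Eᵀ`, which are Gram mates by
`AᵀA = (A + E)ᵀ(A + E)`. -/

open Matrix

namespace Matrix

variable {m n m' k R : Type*} [Fintype n]

theorem mul_transpose_eq_neg_of_mul_transpose_self_eq [NonUnitalNonAssocRing R]
    {A E : Matrix m n R} (h : A * Aᵀ = (A + E) * (A + E)ᵀ) :
    A * Eᵀ = -(E * (A + E)ᵀ) := by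
  rw [eq_neg_iff_add_eq_zero, ← add_eq_left (a := A * Aᵀ)]
  nth_rw 2 [h]
  simp only [transpose_add, Matrix.add_mul, Matrix.mul_add]
  abel

theorem mulVec_mem_span_col_of_mul_transpose_eq [Fintype m'] [Fintype k] [CommRing R]
    {A : Matrix m n R} {M : Matrix m' n R} {N : Matrix m k R} {B : Matrix k m' R}
    (h : A * Mᵀ = N * B)
    {x : n → R} (hx : x ∈ Submodule.span R (Set.range M.row)) :
    A *ᵥ x ∈ Submodule.span R (Set.range N.col) := by
  rw [← range_vecMulLinear] at hx
  obtain ⟨v, rfl⟩ := hx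
  rw [← range_mulVecLin]
  exact ⟨B *ᵥ v, by simp only [mulVecLin_apply, vecMulLinear_apply, ← mulVec_transpose,
    mulVec_mulVec, h]⟩

theorem mulVec_mem_span_col_of_mul_transpose_self_eq [Fintype m] [CommRing R]
    {A E : Matrix m n R} (h : A * Aᵀ = (A + E) * (A + E)ᵀ) {x : n → R}
    (hx : x ∈ Submodule.span R (Set.range E.row)) :
    A *ᵥ x ∈ Submodule.span R (Set.range E.col) :=
  mulVec_mem_span_col_of_mul_transpose_eq
    ((mul_transpose_eq_neg_of_mul_transpose_self_eq h).trans (Matrix.mul_neg _ _).symm) hx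

end Matrix

theorem stmt3_general (m n : ℕ) (A E : Matrix (Fin m) (Fin n) ℝ)
    (h1 : A * Aᵀ = (A + E) * (A + E)ᵀ)
    (h2 : Aᵀ * A = (A + E)ᵀ * (A + E)) :
    (∀ x : Fin n → ℝ, x ∈ Submodule.span ℝ (Set.range fun i => E i) →
      A *ᵥ x ∈ Submodule.span ℝ (Set.range fun j => Eᵀ j)) ∧
    (∀ y : Fin m → ℝ, y ∈ Submodule.span ℝ (Set.range fun j => Eᵀ j) →
      Aᵀ *ᵥ y ∈ Submodule.span ℝ (Set.range fun i => E i)) := by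
  have hT : Aᵀ * Aᵀᵀ = (Aᵀ + Eᵀ) * (Aᵀ + Eᵀ)ᵀ := by
    rwa [transpose_transpose, ← transpose_add, transpose_transpose]
  exact ⟨fun x hx => mulVec_mem_span_col_of_mul_transpose_self_eq h1 hx,
    fun y hy => mulVec_mem_span_col_of_mul_transpose_self_eq hT hy⟩

theorem stmt3 (m n : ℕ) (A E : Matrix (Fin m) (Fin n) ℝ)
    (hA : ∀ i j, A i j = 0 ∨ A i j = 1)
    (hAE : ∀ i j, (A + E) i j = 0 ∨ (A + E) i j = 1)
    (hE : ∀ i j, E i j = 0 ∨ E i j = 1 ∨ E i j = -1)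
    (hE0 : E ≠ 0)
    (hrow : E *ᵥ (fun _ => 1) = 0)
    (hcol : (fun _ => 1) ᵥ* E = 0)
    (h1 : A * Aᵀ = (A + E) * (A + E)ᵀ)
    (h2 : Aᵀ * A = (A + E)ᵀ * (A + E)) :
    (∀ x : Fin n → ℝ, x ∈ Submodule.span ℝ (Set.range fun i => E i) →
      A *ᵥ x ∈ Submodule.span ℝ (Set.range fun j => Eᵀ j)) ∧
    (∀ y : Fin m → ℝ, y ∈ Submodule.span ℝ (Set.range fun j => Eᵀ j) →
      Aᵀ *ᵥ y ∈ Submodule.span ℝ (Set.range fun i => E i)) :=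
  stmt3_general m n A E h1 h2
end

section
/- Let A and A+E be Gram mates via a realizable matrix E of rank k. Then there exist k positive singular values of A whose corresponding right singular vectors form a basis of the row space of E (and whose corresponding left singular vectors form a basis of the column space of E). -/
/-!
Expanding the two Gram identities gives `A Eᵀ + E Aᵀ + E Eᵀ = 0` and its transposed analogue,
and combining them yields `E (AᵀA) = (AAᵀ) E`. Hence the row space `W` of `E` is invariant under
`AᵀA`, and `A` is injective on `W`: if `A Eᵀ y = 0` then
`‖Eᵀ y‖² = yᵀ E Eᵀ y = -yᵀ (A Eᵀ + E Aᵀ) y = 0`. So an orthonormal eigenbasis of `AᵀA` on `W`,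
completed by one on `Wᗮ`, yields right singular vectors of `A`, `k` of which span `W` and have
positive singular values. Their left singular vectors `A v / σ` lie in `A W`, which is contained in
the column space of `E` because `A Eᵀ = -E (A + E)ᵀ`; being `k` independent vectors in a
`k`-dimensional space, they span it.
-/

open Matrix

section GramMates

variable {R : Type*} [CommRing R] {m n : Type*} [Fintype m] [Fintype n]

def AreGramMates (A B : Matrix m n R) : Prop :=
  A * Aᵀ = B * Bᵀ ∧ Aᵀ * A = Bᵀ * B

variable {A E : Matrix m n R}

theorem AreGramMates.transpose {B : Matrix m n R} (h : AreGramMates A B) :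
    AreGramMates Aᵀ Bᵀ :=
  ⟨by simpa only [transpose_transpose] using h.2, by simpa only [transpose_transpose] using h.1⟩

theorem AreGramMates.cross_terms_eq_zero (h : AreGramMates A (A + E)) :
    A * Eᵀ + E * Aᵀ + E * Eᵀ = 0 := by
  have h1 := h.1
  rw [transpose_add, Matrix.add_mul, Matrix.mul_add, Matrix.mul_add] at h1
  calc A * Eᵀ + E * Aᵀ + E * Eᵀ
      = A * Aᵀ + A * Eᵀ + (E * Aᵀ + E * Eᵀ) - A * Aᵀ := by abel
    _ = 0 := by rw [← h1, sub_self]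

theorem AreGramMates.mul_gram_eq_gram_mul (h : AreGramMates A (A + E)) :
    E * (Aᵀ * A) = A * Aᵀ * E := by
  have hX := h.cross_terms_eq_zero
  have hY := (transpose_add A E ▸ h.transpose).cross_terms_eq_zero
  simp only [transpose_transpose] at hY
  rw [← sub_eq_zero]
  calc E * (Aᵀ * A) - A * Aᵀ * E
      = (A * Eᵀ + E * Aᵀ + E * Eᵀ) * (E + A) - (A + E) * (Aᵀ * E + Eᵀ * A + Eᵀ * E) := by
        simp only [Matrix.add_mul, Matrix.mul_add, Matrix.mul_assoc]; abel
    _ = 0 := by rw [hX, hY, Matrix.zero_mul, Matrix.mul_zero, sub_zero]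

theorem AreGramMates.gram_mulVec_mem_range_transpose (h : AreGramMates A (A + E)) {v : n → R}
    (hv : v ∈ LinearMap.range Eᵀ.mulVecLin) :
    (Aᵀ * A) *ᵥ v ∈ LinearMap.range Eᵀ.mulVecLin := by
  obtain ⟨y, rfl⟩ := hv
  have hcomm := (transpose_add A E ▸ h.transpose).mul_gram_eq_gram_mul
  simp only [transpose_transpose] at hcomm
  exact ⟨(A * Aᵀ) *ᵥ y, by simp only [mulVecLin_apply, mulVec_mulVec, hcomm, Matrix.mul_assoc]⟩

theorem AreGramMates.mulVec_mem_range_of_mem_range_transpose (h : AreGramMates A (A + E))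
    {v : n → R} (hv : v ∈ LinearMap.range Eᵀ.mulVecLin) :
    A *ᵥ v ∈ LinearMap.range E.mulVecLin := by
  obtain ⟨y, rfl⟩ := hv
  have hAE : A * Eᵀ = E * -(A + E)ᵀ := by
    rw [transpose_add, Matrix.mul_neg, Matrix.mul_add, eq_neg_iff_add_eq_zero, ← add_assoc]
    exact h.cross_terms_eq_zero
  exact ⟨-(A + E)ᵀ *ᵥ y, by simp only [mulVecLin_apply, mulVec_mulVec, hAE]⟩

theorem AreGramMates.disjoint_range_transpose_ker [LinearOrder R] [IsStrictOrderedRing R]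
    (h : AreGramMates A (A + E)) :
    Disjoint (LinearMap.range Eᵀ.mulVecLin) (LinearMap.ker A.mulVecLin) := by
  rw [Submodule.disjoint_def]
  rintro _ ⟨y, rfl⟩ hAx
  set x := Eᵀ *ᵥ y with hx
  replace hAx : A *ᵥ x = 0 := hAx
  have hEx : E *ᵥ x = -(E *ᵥ (Aᵀ *ᵥ y)) := by
    have hEE : E * Eᵀ = -(A * Eᵀ) - E * Aᵀ := by
      rw [eq_sub_iff_add_eq, eq_neg_iff_add_eq_zero, ← h.cross_terms_eq_zero]; abel
    rw [hx, mulVec_mulVec, hEE, sub_mulVec, neg_mulVec, ← mulVec_mulVec, ← hx, hAx,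
      ← mulVec_mulVec, neg_zero, zero_sub]
  have hxx : x ⬝ᵥ x = 0 := calc
    x ⬝ᵥ x = y ⬝ᵥ (E *ᵥ x) := by rw [dotProduct_mulVec y, ← mulVec_transpose]
    _ = -((A *ᵥ x) ⬝ᵥ y) := by
      rw [hEx, dotProduct_neg, dotProduct_mulVec, ← mulVec_transpose, dotProduct_mulVec,
        ← mulVec_transpose, transpose_transpose, dotProduct_comm]
    _ = 0 := by rw [hAx, zero_dotProduct, neg_zero]
  exact dotProduct_self_eq_zero.mp hxx

end GramMates

section Spectral

variable {𝕜 E : Type*} [RCLike 𝕜] [NormedAddCommGroup E] [InnerProductSpace 𝕜 E]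

theorem Orthonormal.sum_elim {ι κ : Type*} {v : ι → E} {w : κ → E} (hv : Orthonormal 𝕜 v)
    (hw : Orthonormal 𝕜 w) (hvw : ∀ i j, inner 𝕜 (v i) (w j) = 0) :
    Orthonormal 𝕜 (Sum.elim v w) := by
  refine ⟨Sum.forall.2 ⟨hv.1, hw.1⟩, ?_⟩
  rintro (i | i) (j | j) hij
  · exact hv.2 fun h => hij (congrArg Sum.inl h)
  · exact hvw i j
  · exact inner_eq_zero_symm.mp (hvw j i)
  · exact hw.2 fun h => hij (congrArg Sum.inr h)

namespace LinearMap.IsSymmetric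

variable {T : E →ₗ[𝕜] E} {W : Submodule 𝕜 E}

theorem orthogonal_invariant (hT : T.IsSymmetric) (hW : ∀ v ∈ W, T v ∈ W) : ∀ v ∈ Wᗮ, T v ∈ Wᗮ := by
  intro v hv u hu
  rw [← hT u v]
  exact hv (T u) (hW u hu)

variable [FiniteDimensional 𝕜 E]

theorem exists_orthonormal_eigenvectors_mem (hT : T.IsSymmetric) (hW : ∀ v ∈ W, T v ∈ W) :
    ∃ (v : Fin (Module.finrank 𝕜 W) → E) (lam : Fin (Module.finrank 𝕜 W) → ℝ),
      Orthonormal 𝕜 v ∧ (∀ i, v i ∈ W) ∧ ∀ i, T (v i) = (lam i : 𝕜) • v i := by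
  set hTW := hT.restrict_invariant hW
  refine ⟨fun i => hTW.eigenvectorBasis rfl i, hTW.eigenvalues rfl,
    (hTW.eigenvectorBasis rfl).orthonormal.comp_linearIsometry W.subtypeₗᵢ,
    fun i => (hTW.eigenvectorBasis rfl i).2, fun i => ?_⟩
  exact congrArg Subtype.val (hTW.apply_eigenvectorBasis rfl i)

theorem exists_orthonormalBasis_eigenvectors_adapted (hT : T.IsSymmetric)
    (hW : ∀ v ∈ W, T v ∈ W) :
    ∃ (b : OrthonormalBasis (Fin (Module.finrank 𝕜 W) ⊕ Fin (Module.finrank 𝕜 Wᗮ)) 𝕜 E)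
      (lam : Fin (Module.finrank 𝕜 W) ⊕ Fin (Module.finrank 𝕜 Wᗮ) → ℝ),
      (∀ i, T (b i) = (lam i : 𝕜) • b i) ∧ ∀ i, b (Sum.inl i) ∈ W := by
  obtain ⟨v, lam, hv, hvW, hTv⟩ := hT.exists_orthonormal_eigenvectors_mem hW
  obtain ⟨w, mu, hw, hwW, hTw⟩ :=
    hT.exists_orthonormal_eigenvectors_mem (hT.orthogonal_invariant hW)
  have hon := hv.sum_elim hw fun i j => Submodule.inner_right_of_mem_orthogonal (hvW i) (hwW j)
  have hcard : Fintype.card (Fin (Module.finrank 𝕜 W) ⊕ Fin (Module.finrank 𝕜 Wᗮ)) =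
      Module.finrank 𝕜 E := by
    simp [W.finrank_add_finrank_orthogonal]
  refine ⟨.mk hon (hon.linearIndependent.span_eq_top_of_card_eq_finrank' hcard).ge,
    Sum.elim lam mu, ?_, by simpa using hvW⟩
  rintro (i | i) <;> simp [hTv, hTw]

end LinearMap.IsSymmetric

end Spectral

theorem exists_equiv_fin_val_lt_card {ι : Type*} [Fintype ι] (p : ι → Prop) [DecidablePred p]
    {n : ℕ} (hn : Fintype.card ι = n) :
    ∃ e : ι ≃ Fin n, ∀ i, p i → (e i : ℕ) < Fintype.card {i // p i} := by
  have hcard : Fintype.card {i // p i} + Fintype.card {i // ¬p i} = n := by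
    rw [Fintype.card_subtype_compl, ← hn]
    have := Fintype.card_subtype_le p
    omega
  refine ⟨(Equiv.sumCompl p).symm.trans <|
    ((Fintype.equivFin _).sumCongr (Fintype.equivFin _)).trans <|
      finSumFinEquiv.trans (finCongr hcard), fun i hi => ?_⟩
  simp [Equiv.sumCompl_symm_apply_of_pos hi]

theorem Orthonormal.exists_orthonormalBasis_extension_of_injective {𝕜 E : Type*} [RCLike 𝕜]
    [NormedAddCommGroup E] [InnerProductSpace 𝕜 E] [FiniteDimensional 𝕜 E] {ι κ : Type*}
    [Fintype ι] (hcard : Module.finrank 𝕜 E = Fintype.card ι) {v : κ → E}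
    (hv : Orthonormal 𝕜 v) {ψ : κ → ι} (hψ : Function.Injective ψ) :
    ∃ b : OrthonormalBasis ι 𝕜 E, ∀ x, b (ψ x) = v x := by
  have hrestrict : (Set.range ψ).domRestrict (Function.extend ψ v 0) =
      v ∘ (Equiv.ofInjective ψ hψ).symm := by
    funext ⟨_, x, rfl⟩
    simp [Set.domRestrict_apply, hψ.extend_apply]
  obtain ⟨b, hb⟩ := Orthonormal.exists_orthonormalBasis_extension_of_card_eq hcard
    (s := Set.range ψ) (hrestrict ▸ hv.comp _ (Equiv.injective _))
  exact ⟨b, fun x => by rw [hb _ ⟨x, rfl⟩, hψ.extend_apply]⟩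

section AdjointMulSelf

variable {E F : Type*} [NormedAddCommGroup E] [InnerProductSpace ℝ E] [FiniteDimensional ℝ E]
  [NormedAddCommGroup F] [InnerProductSpace ℝ F] [FiniteDimensional ℝ F] (L : E →ₗ[ℝ] F)

theorem LinearMap.eigenvalue_adjoint_comp_self_eq_norm_sq {x : E} {μ : ℝ} (hx : ‖x‖ = 1)
    (h : L.adjoint (L x) = μ • x) : μ = ‖L x‖ ^ 2 := by
  rw [← real_inner_self_eq_norm_sq, ← LinearMap.adjoint_inner_left, h,
    real_inner_smul_left, real_inner_self_eq_norm_sq, hx, one_pow, mul_one]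

theorem LinearMap.orthonormal_inv_sqrt_smul_map {ι : Type*} {v : ι → E} {lam : ι → ℝ}
    (hv : Orthonormal ℝ v) (h : ∀ i, L.adjoint (L (v i)) = lam i • v i) :
    Orthonormal ℝ fun i : {i // lam i ≠ 0} => (√(lam i))⁻¹ • L (v i) := by
  classical
  rw [orthonormal_iff_ite]
  rintro ⟨i, hi⟩ ⟨j, hj⟩
  have hpos : 0 < lam i :=
    (L.eigenvalue_adjoint_comp_self_eq_norm_sq (hv.1 i) (h i) ▸ sq_nonneg _).lt_of_ne' hi
  rw [real_inner_smul_left, real_inner_smul_right, ← LinearMap.adjoint_inner_left, h,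
    real_inner_smul_left, orthonormal_iff_ite.mp hv]
  by_cases hij : i = j
  · subst hij
    rw [if_pos rfl, if_pos rfl, mul_one, ← mul_assoc, ← mul_inv, Real.mul_self_sqrt hpos.le,
      inv_mul_cancel₀ hpos.ne']
  · simp [hij]

end AdjointMulSelf

theorem Matrix.adjoint_toEuclideanLin_apply {m n : Type*} [Fintype m] [Fintype n] [DecidableEq m]
    [DecidableEq n] (A : Matrix m n ℝ) (x : EuclideanSpace ℝ n) :
    (toEuclideanLin A).adjoint (toEuclideanLin A x) = WithLp.toLp 2 ((Aᵀ * A) *ᵥ x) := by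
  rw [← toEuclideanLin_conjTranspose_eq_adjoint, conjTranspose_eq_transpose_of_trivial]
  simp [toLpLin_apply, mulVec_mulVec]

theorem OrthonormalBasis.of_cols_orthogonal {ι : Type*} [Fintype ι] [DecidableEq ι]
    (b : OrthonormalBasis ι ℝ (EuclideanSpace ℝ ι)) :
    (of fun r j => b j r) * (of fun r j => b j r)ᵀ = 1 ∧
      (of fun r j => b j r)ᵀ * (of fun r j => b j r) = 1 := by
  have h := (EuclideanSpace.basisFun ι ℝ).toMatrix_orthonormalBasis_mem_orthogonal b
  have hb : (EuclideanSpace.basisFun ι ℝ).toBasis.toMatrix b = of fun r j => b j r := by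
    ext r j; simp [Module.Basis.toMatrix_apply]
  rw [hb] at h
  exact ⟨(mem_orthogonalGroup_iff _ _).mp h, (mem_orthogonalGroup_iff' _ _).mp h⟩

theorem Matrix.exists_mul_eq_mul_of_eigenbasis {m n : ℕ} (A : Matrix (Fin m) (Fin n) ℝ)
    (b : OrthonormalBasis (Fin n) ℝ (EuclideanSpace ℝ (Fin n))) {lam : Fin n → ℝ}
    (hb : ∀ j, (toEuclideanLin A).adjoint (toEuclideanLin A (b j)) = lam j • b j)
    (hfront : ∀ j, lam j ≠ 0 → (j : ℕ) < m) :
    ∃ U : Matrix (Fin m) (Fin m) ℝ, (U * Uᵀ = 1 ∧ Uᵀ * U = 1) ∧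
      A * (of fun r j => b j r) =
        U * of (fun (i : Fin m) (j : Fin n) => if (i : ℕ) = j then √(lam j) else 0) ∧
      ∀ (i : Fin m) (j : Fin n), (i : ℕ) = j → lam j ≠ 0 → U.col i = (√(lam j))⁻¹ • A *ᵥ b j := by
  obtain ⟨bU, hbU⟩ :=
    ((toEuclideanLin A).orthonormal_inv_sqrt_smul_map b.orthonormal hb)
      |>.exists_orthonormalBasis_extension_of_injective (ψ := fun j => (⟨j, hfront j j.2⟩ : Fin m))
      (by simp) fun x y h => Subtype.ext (Fin.ext (Fin.mk.inj h))
  have hUcol : ∀ (i : Fin m) (j : Fin n), (i : ℕ) = j → lam j ≠ 0 →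
      (of fun r i => bU i r).col i = (√(lam j))⁻¹ • A *ᵥ b j := by
    intro i j hij hj
    obtain rfl : i = ⟨j, hfront j hj⟩ := Fin.ext hij
    ext r
    simp [hbU ⟨j, hj⟩, toLpLin_apply]
  refine ⟨of fun r i => bU i r, bU.of_cols_orthogonal, ?_, hUcol⟩
  ext r j
  have hnorm :=
    (toEuclideanLin A).eigenvalue_adjoint_comp_self_eq_norm_sq (b.orthonormal.1 j) (hb j)
  by_cases hj : lam j = 0
  · have hAb : A *ᵥ b j = 0 := by
      rw [hj, eq_comm, pow_eq_zero_iff two_ne_zero, norm_eq_zero, toLpLin_apply] at hnorm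
      exact congrArg WithLp.ofLp hnorm
    simpa [hj, mul_apply, mulVec, dotProduct] using congrFun hAb r
  · have hjm := hfront j hj
    have hcol := congrFun (hUcol ⟨j, hjm⟩ j rfl hj) r
    rw [mul_apply, mul_apply, Finset.sum_eq_single (⟨j, hjm⟩ : Fin m)]
    · simp only [col_apply, of_apply] at hcol ⊢
      have hsqrt : √(lam j) ≠ 0 :=
        Real.sqrt_ne_zero'.mpr ((hnorm ▸ sq_nonneg _).lt_of_ne' hj)
      rw [hcol, if_pos trivial, Pi.smul_apply, smul_eq_mul, mul_comm, ← mul_assoc,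
        mul_inv_cancel₀ hsqrt, one_mul]
      rfl
    · intro i _ hi
      rw [of_apply, of_apply, if_neg fun h => hi (Fin.ext h), mul_zero]
    · exact fun h => absurd (Finset.mem_univ _) h

theorem Matrix.exists_eigenbasis_adapted {m n k : ℕ} (A : Matrix (Fin m) (Fin n) ℝ)
    (W : Submodule ℝ (Fin n → ℝ)) (hk : Module.finrank ℝ W = k)
    (hW : ∀ v ∈ W, (Aᵀ * A) *ᵥ v ∈ W) (hker : Disjoint W (LinearMap.ker A.mulVecLin)) :
    ∃ (b : OrthonormalBasis (Fin n) ℝ (EuclideanSpace ℝ (Fin n))) (lam : Fin n → ℝ)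
      (g : Fin k → Fin n),
      (∀ j, (toEuclideanLin A).adjoint (toEuclideanLin A (b j)) = lam j • b j) ∧
      (∀ j, lam j ≠ 0 → (j : ℕ) < m) ∧ Function.Injective g ∧ (∀ i, 0 < lam (g i)) ∧
      ∀ i, (b (g i)).ofLp ∈ W := by
  set L := toEuclideanLin A
  set W' := W.map (WithLp.linearEquiv 2 ℝ (Fin n → ℝ)).symm.toLinearMap
  have hW' : ∀ v ∈ W', (L.adjoint ∘ₗ L) v ∈ W' := fun v hv => by
    simp only [W', Submodule.mem_map_equiv] at hv ⊢
    simpa [L, adjoint_toEuclideanLin_apply] using hW _ hv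
  have hk' : Module.finrank ℝ W' = k := by
    rw [← hk, LinearEquiv.finrank_map_eq]
  obtain ⟨b₀, lam, heig, hb₀W⟩ :=
    L.isSymmetric_adjoint_comp_self.exists_orthonormalBasis_eigenvectors_adapted hW'
  replace heig : ∀ i, L.adjoint (L (b₀ i)) = lam i • b₀ i := by simpa using heig
  replace hb₀W : ∀ i, (b₀ (Sum.inl i)).ofLp ∈ W := by
    simpa [W', Submodule.mem_map_equiv] using hb₀W
  have hnorm i := L.eigenvalue_adjoint_comp_self_eq_norm_sq (b₀.orthonormal.1 i) (heig i)
  have hpos : ∀ i, 0 < lam (Sum.inl i) := by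
    intro i
    refine (hnorm _ ▸ sq_nonneg _).lt_of_ne' fun h0 => ?_
    rw [hnorm, sq_eq_zero_iff, norm_eq_zero] at h0
    have hb₀ := Submodule.disjoint_def.mp hker _ (hb₀W i) (congrArg WithLp.ofLp h0)
    exact b₀.orthonormal.ne_zero _ (WithLp.ofLp_injective 2 hb₀)
  have hcard : Fintype.card {i // lam i ≠ 0} ≤ m := by
    simpa using
      (L.orthonormal_inv_sqrt_smul_map b₀.orthonormal heig).linearIndependent.fintype_card_le_finrank
  obtain ⟨e, he⟩ := exists_equiv_fin_val_lt_card (fun i => lam i ≠ 0)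
    (by simpa using (Module.finrank_eq_card_basis b₀.toBasis).symm)
  refine ⟨b₀.reindex e, lam ∘ e.symm, fun i => e (Sum.inl (Fin.cast hk'.symm i)),
    ?_, ?_, ?_, ?_, ?_⟩
  · intro j; simpa using heig (e.symm j)
  · intro j hj; simpa using (he _ hj).trans_le hcard
  · exact e.injective.comp (Sum.inl_injective.comp (Fin.cast_injective _))
  · intro i; simpa using hpos _
  · intro i; simpa using hb₀W (Fin.cast hk'.symm i)

theorem Matrix.exists_svd_of_invariant {m n k : ℕ} (A : Matrix (Fin m) (Fin n) ℝ)
    (W : Submodule ℝ (Fin n → ℝ)) (hk : Module.finrank ℝ W = k)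
    (hW : ∀ v ∈ W, (Aᵀ * A) *ᵥ v ∈ W) (hker : Disjoint W (LinearMap.ker A.mulVecLin)) :
    ∃ (U : Matrix (Fin m) (Fin m) ℝ) (V : Matrix (Fin n) (Fin n) ℝ)
      (D : Matrix (Fin m) (Fin n) ℝ),
      (U * Uᵀ = 1 ∧ Uᵀ * U = 1) ∧ (V * Vᵀ = 1 ∧ Vᵀ * V = 1) ∧
      (∀ (i : Fin m) (j : Fin n), (i : ℕ) ≠ (j : ℕ) → D i j = 0) ∧ (∀ i j, 0 ≤ D i j) ∧
      A = U * D * Vᵀ ∧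
      ∃ (f : Fin k → Fin m) (g : Fin k → Fin n),
        (∀ i, (f i : ℕ) = (g i : ℕ)) ∧ Function.Injective g ∧ (∀ i, 0 < D (f i) (g i)) ∧
        (∀ i, V.col (g i) ∈ W) ∧ ∀ i, U.col (f i) = (D (f i) (g i))⁻¹ • A *ᵥ V.col (g i) := by
  obtain ⟨b, lam, g, hb, hfront, hg, hpos, hbW⟩ := A.exists_eigenbasis_adapted W hk hW hker
  obtain ⟨U, hU, hAV, hUcol⟩ := A.exists_mul_eq_mul_of_eigenbasis b hb hfront
  have hV := b.of_cols_orthogonal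
  refine ⟨U, _, of fun (i : Fin m) (j : Fin n) => if (i : ℕ) = j then √(lam j) else 0, hU, hV,
    fun i j hij => if_neg hij, fun i j => ?_, ?_,
    fun i => ⟨g i, hfront _ (hpos i).ne'⟩, g, fun i => rfl, hg, fun i => ?_, hbW,
    fun i => ?_⟩
  · dsimp only [of_apply]
    split_ifs <;> positivity
  · calc A = A * ((of fun r j => b j r) * (of fun r j => b j r)ᵀ) := by rw [hV.1, Matrix.mul_one]
      _ = _ := by rw [← Matrix.mul_assoc, hAV]
  · simpa using hpos i
  · rw [of_apply, if_pos rfl]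
    exact hUcol _ (g i) rfl (hpos i).ne'

theorem Matrix.linearIndependent_col_comp_of_mul_transpose_eq_one {R ι κ : Type*} [CommRing R]
    [Fintype ι] [DecidableEq ι] {M : Matrix ι ι R} (hM : M * Mᵀ = 1) {g : κ → ι}
    (hg : Function.Injective g) : LinearIndependent R fun i => M.col (g i) :=
  (linearIndependent_cols_of_isUnit
    ((isUnit_iff_isUnit_det M).mpr (isUnit_det_of_right_inverse hM))).comp g hg

theorem Submodule.span_range_eq_of_linearIndependent {K V ι : Type*} [DivisionRing K]
    [AddCommGroup V] [Module K V] [Fintype ι] {P : Submodule K V} [FiniteDimensional K P]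
    {v : ι → V} (hv : LinearIndependent K v) (hmem : ∀ i, v i ∈ P)
    (hcard : Module.finrank K P = Fintype.card ι) : span K (Set.range v) = P :=
  eq_of_le_of_finrank_le (span_le.mpr (Set.range_subset_iff.mpr hmem))
    (by rw [finrank_span_eq_card hv, hcard])

theorem stmt4_general (m n k : ℕ) (A E : Matrix (Fin m) (Fin n) ℝ)
    (h1 : A * Aᵀ = (A + E) * (A + E)ᵀ)
    (h2 : Aᵀ * A = (A + E)ᵀ * (A + E))
    (hrank : E.rank = k) :
    ∃ (U : Matrix (Fin m) (Fin m) ℝ) (V : Matrix (Fin n) (Fin n) ℝ)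
      (D : Matrix (Fin m) (Fin n) ℝ),
      (U * Uᵀ = 1 ∧ Uᵀ * U = 1) ∧ (V * Vᵀ = 1 ∧ Vᵀ * V = 1) ∧
      (∀ (i : Fin m) (j : Fin n), (i : ℕ) ≠ (j : ℕ) → D i j = 0) ∧ (∀ i j, 0 ≤ D i j) ∧
      A = U * D * Vᵀ ∧
      ∃ (f : Fin k → Fin m) (g : Fin k → Fin n),
        (∀ i, (f i : ℕ) = (g i : ℕ)) ∧
        (∀ i, 0 < D (f i) (g i)) ∧
        LinearIndependent ℝ (fun i : Fin k => fun r => V r (g i)) ∧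
        Submodule.span ℝ (Set.range fun i : Fin k => fun r => V r (g i)) =
          Submodule.span ℝ (Set.range fun i => E i) ∧
        LinearIndependent ℝ (fun i : Fin k => fun r => U r (f i)) ∧
        Submodule.span ℝ (Set.range fun i : Fin k => fun r => U r (f i)) =
          Submodule.span ℝ (Set.range fun j => Eᵀ j) := by
  have hG : AreGramMates A (A + E) := ⟨h1, h2⟩
  have hrows : Submodule.span ℝ (Set.range fun i => E i) = LinearMap.range Eᵀ.mulVecLin :=
    (range_mulVecLin Eᵀ).symm
  have hcols : Submodule.span ℝ (Set.range fun j => Eᵀ j) = LinearMap.range E.mulVecLin :=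
    (range_mulVecLin E).symm
  have hrowk : Module.finrank ℝ (LinearMap.range Eᵀ.mulVecLin) = k := (rank_transpose E).trans hrank
  have hcolk : Module.finrank ℝ (LinearMap.range E.mulVecLin) = k := hrank
  obtain ⟨U, V, D, hU, hV, hdiag, hnonneg, hA, f, g, hfg, hg, hD, hVW, hUcol⟩ :=
    A.exists_svd_of_invariant _ hrowk
      (fun _ => hG.gram_mulVec_mem_range_transpose) hG.disjoint_range_transpose_ker
  have hf : Function.Injective f := fun i j hij => hg (Fin.ext (by rw [← hfg, ← hfg, hij]))
  refine ⟨U, V, D, hU, hV, hdiag, hnonneg, hA, f, g, hfg, hD,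
    linearIndependent_col_comp_of_mul_transpose_eq_one hV.1 hg, ?_,
    linearIndependent_col_comp_of_mul_transpose_eq_one hU.1 hf, ?_⟩
  · rw [hrows]
    exact Submodule.span_range_eq_of_linearIndependent
      (linearIndependent_col_comp_of_mul_transpose_eq_one hV.1 hg) hVW
      (by simp [hrowk])
  · rw [hcols]
    refine Submodule.span_range_eq_of_linearIndependent
      (linearIndependent_col_comp_of_mul_transpose_eq_one hU.1 hf) (fun i => ?_) (by simp [hcolk])
    change U.col (f i) ∈ _
    rw [hUcol]
    exact Submodule.smul_mem _ _ (hG.mulVec_mem_range_of_mem_range_transpose (hVW i))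

theorem stmt4 (m n k : ℕ) (A E : Matrix (Fin m) (Fin n) ℝ)
    (hA : ∀ i j, A i j = 0 ∨ A i j = 1)
    (hAE : ∀ i j, (A + E) i j = 0 ∨ (A + E) i j = 1)
    (hE : ∀ i j, E i j = 0 ∨ E i j = 1 ∨ E i j = -1)
    (hE0 : E ≠ 0)
    (hrow : E *ᵥ (fun _ => 1) = 0)
    (hcol : (fun _ => 1) ᵥ* E = 0)
    (h1 : A * Aᵀ = (A + E) * (A + E)ᵀ)
    (h2 : Aᵀ * A = (A + E)ᵀ * (A + E))
    (hrank : E.rank = k) :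
    ∃ (U : Matrix (Fin m) (Fin m) ℝ) (V : Matrix (Fin n) (Fin n) ℝ)
      (D : Matrix (Fin m) (Fin n) ℝ),
      (U * Uᵀ = 1 ∧ Uᵀ * U = 1) ∧ (V * Vᵀ = 1 ∧ Vᵀ * V = 1) ∧
      (∀ (i : Fin m) (j : Fin n), (i : ℕ) ≠ (j : ℕ) → D i j = 0) ∧ (∀ i j, 0 ≤ D i j) ∧
      A = U * D * Vᵀ ∧
      ∃ (f : Fin k → Fin m) (g : Fin k → Fin n),
        (∀ i, (f i : ℕ) = (g i : ℕ)) ∧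
        (∀ i, 0 < D (f i) (g i)) ∧
        LinearIndependent ℝ (fun i : Fin k => fun r => V r (g i)) ∧
        Submodule.span ℝ (Set.range fun i : Fin k => fun r => V r (g i)) =
          Submodule.span ℝ (Set.range fun i => E i) ∧
        LinearIndependent ℝ (fun i : Fin k => fun r => U r (f i)) ∧
        Submodule.span ℝ (Set.range fun i : Fin k => fun r => U r (f i)) =
          Submodule.span ℝ (Set.range fun j => Eᵀ j) :=
  stmt4_general m n k A E h1 h2 hrank
end

section
/- Let A₁ and A₂ be (0,1) matrices of the same size with A₁ ≠ A₂, and let A = [[A₁, A₂],[A₂, A₁]] and B = [[A₂, A₁],[A₁, A₂]]. Then A and B are Gram mates, and moreover (A+B)(A−B)ᵀ = 0. -/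
open Matrix

theorem stmt7 (m n : ℕ) (A₁ A₂ : Matrix (Fin m) (Fin n) ℝ)
    (h₁ : ∀ i j, A₁ i j = 0 ∨ A₁ i j = 1)
    (h₂ : ∀ i j, A₂ i j = 0 ∨ A₂ i j = 1)
    (hne : A₁ ≠ A₂) :
    let A := Matrix.fromBlocks A₁ A₂ A₂ A₁
    let B := Matrix.fromBlocks A₂ A₁ A₁ A₂
    A * Aᵀ = B * Bᵀ ∧ Aᵀ * A = Bᵀ * B ∧ A ≠ B ∧ (A + B) * (A - B)ᵀ = 0 := by
  intro A B
  refine ⟨?_, ?_, ?_, ?_⟩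
  · simp only [A, B, fromBlocks_transpose, fromBlocks_multiply]
    congr 1 <;> abel
  · simp only [A, B, fromBlocks_transpose, fromBlocks_multiply]
    congr 1 <;> abel
  · intro h
    apply hne
    have := congrArg (fun M => Matrix.toBlocks₁₁ M) h
    simpa [A, B, Matrix.toBlocks_fromBlocks₁₁] using this
  · have key : (A₁ + A₂) * (A₁ - A₂)ᵀ + (A₁ + A₂) * (A₂ - A₁)ᵀ = 0 := by
      rw [← Matrix.mul_add]
      have h0 : (A₁ - A₂)ᵀ + (A₂ - A₁)ᵀ = 0 := by
        rw [transpose_sub, transpose_sub]; abel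
      rw [h0, Matrix.mul_zero]
    have key2 : (A₁ + A₂) * (A₂ - A₁)ᵀ + (A₁ + A₂) * (A₁ - A₂)ᵀ = 0 := by
      rw [add_comm]; exact key
    have hsub : A - B = fromBlocks (A₁ - A₂) (A₂ - A₁) (A₂ - A₁) (A₁ - A₂) := by
      ext (i | i) (j | j) <;> simp [A, B]
    have hadd : A + B = fromBlocks (A₁ + A₂) (A₁ + A₂) (A₁ + A₂) (A₁ + A₂) := by
      ext (i | i) (j | j) <;> simp [A, B] <;> exact add_comm _ _
    rw [hsub, hadd, fromBlocks_transpose, fromBlocks_multiply, key, key2,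
      ← fromBlocks_zero]
end

section
/- Let E = [[Ẽ, 0],[0, 0]] be a (0,1,−1) matrix with zero row and column sums, partitioned conformally, and let A = [[Ã, X₁],[X₂, X₃]] be a (0,1) matrix with the same partition. Then A and A+E are Gram mates if and only if Ã and Ã+Ẽ are Gram mates, Ẽ X₂ᵀ = 0, and Ẽᵀ X₁ = 0. -/
/-!
The Gram identities for `A` and `A + E` say exactly that the cross terms
`A Eᵀ + E Aᵀ + E Eᵀ` and `Aᵀ E + Eᵀ A + Eᵀ E` vanish. When `E` is supported on the upper-left
block, the first of these is the block matrix
`[[Ã Ẽᵀ + Ẽ Ãᵀ + Ẽ Ẽᵀ, Ẽ X₂ᵀ], [X₂ Ẽᵀ, 0]]`, whose off-diagonal blocks are transposes of each other;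
the second is the same computation for the transposed matrices, with `X₁` in place of `X₂`.
-/

open Matrix

namespace Matrix

def IsGramMate {m n R : Type*} [Fintype m] [Fintype n] [Mul R] [AddCommMonoid R]
    (M N : Matrix m n R) : Prop :=
  M * Mᵀ = N * Nᵀ ∧ Mᵀ * M = Nᵀ * N ∧ M ≠ N

variable {l m n o R : Type*}

theorem mul_transpose_eq_add_mul_transpose_add_iff [Fintype n] [NonUnitalNonAssocRing R]
    (M N : Matrix m n R) :
    M * Mᵀ = (M + N) * (M + N)ᵀ ↔ M * Nᵀ + N * Mᵀ + N * Nᵀ = 0 := by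
  have expand : (M + N) * (M + N)ᵀ = M * Mᵀ + (M * Nᵀ + N * Mᵀ + N * Nᵀ) := by
    rw [transpose_add, Matrix.add_mul, Matrix.mul_add, Matrix.mul_add]
    abel
  rw [expand, left_eq_add]

theorem fromBlocks_ne_add_fromBlocks_iff [AddGroup R] (A E : Matrix m n R) (B : Matrix m o R)
    (C : Matrix l n R) (D : Matrix l o R) :
    fromBlocks A B C D ≠ fromBlocks A B C D + fromBlocks E 0 0 0 ↔ A ≠ A + E := by
  simp only [ne_eq, left_eq_add, ← fromBlocks_zero, fromBlocks_inj, and_true]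

variable [CommRing R]

theorem fromBlocks_mul_transpose_eq_iff [Fintype n] [Fintype o] (A E : Matrix m n R)
    (B : Matrix m o R) (C : Matrix l n R) (D : Matrix l o R) :
    fromBlocks A B C D * (fromBlocks A B C D)ᵀ =
        (fromBlocks A B C D + fromBlocks E 0 0 0) * (fromBlocks A B C D + fromBlocks E 0 0 0)ᵀ ↔
      A * Aᵀ = (A + E) * (A + E)ᵀ ∧ E * Cᵀ = 0 := by
  have transpose_cross : C * Eᵀ = (E * Cᵀ)ᵀ := by rw [transpose_mul, transpose_transpose]
  rw [mul_transpose_eq_add_mul_transpose_add_iff, mul_transpose_eq_add_mul_transpose_add_iff]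
  simp only [fromBlocks_transpose, transpose_zero, fromBlocks_multiply, fromBlocks_add,
    Matrix.mul_zero, Matrix.zero_mul, add_zero, zero_add, ← fromBlocks_zero, fromBlocks_inj,
    transpose_cross, transpose_eq_zero]
  tauto

theorem transpose_fromBlocks_mul_eq_iff [Fintype l] [Fintype m] (A E : Matrix m n R)
    (B : Matrix m o R) (C : Matrix l n R) (D : Matrix l o R) :
    (fromBlocks A B C D)ᵀ * fromBlocks A B C D =
        (fromBlocks A B C D + fromBlocks E 0 0 0)ᵀ * (fromBlocks A B C D + fromBlocks E 0 0 0) ↔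
      Aᵀ * A = (A + E)ᵀ * (A + E) ∧ Eᵀ * B = 0 := by
  simpa only [fromBlocks_transpose, transpose_zero, transpose_add, transpose_transpose] using
    fromBlocks_mul_transpose_eq_iff Aᵀ Eᵀ Cᵀ Bᵀ Dᵀ

theorem isGramMate_fromBlocks_add_iff [Fintype l] [Fintype m] [Fintype n] [Fintype o]
    (A E : Matrix m n R) (B : Matrix m o R) (C : Matrix l n R) (D : Matrix l o R) :
    IsGramMate (fromBlocks A B C D) (fromBlocks A B C D + fromBlocks E 0 0 0) ↔
      IsGramMate A (A + E) ∧ E * Cᵀ = 0 ∧ Eᵀ * B = 0 := by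
  rw [IsGramMate, IsGramMate, fromBlocks_mul_transpose_eq_iff, transpose_fromBlocks_mul_eq_iff,
    fromBlocks_ne_add_fromBlocks_iff]
  tauto

end Matrix

theorem stmt8_general (m₁ m₂ n₁ n₂ : ℕ)
    (Et At : Matrix (Fin m₁) (Fin n₁) ℝ)
    (X₁ : Matrix (Fin m₁) (Fin n₂) ℝ)
    (X₂ : Matrix (Fin m₂) (Fin n₁) ℝ)
    (X₃ : Matrix (Fin m₂) (Fin n₂) ℝ) :
    (let A := Matrix.fromBlocks At X₁ X₂ X₃
     let E : Matrix (Fin m₁ ⊕ Fin m₂) (Fin n₁ ⊕ Fin n₂) ℝ := Matrix.fromBlocks Et 0 0 0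
     A * Aᵀ = (A + E) * (A + E)ᵀ ∧ Aᵀ * A = (A + E)ᵀ * (A + E) ∧ A ≠ A + E) ↔
    ((At * Atᵀ = (At + Et) * (At + Et)ᵀ ∧ Atᵀ * At = (At + Et)ᵀ * (At + Et) ∧
        At ≠ At + Et) ∧
      Et * X₂ᵀ = 0 ∧ Etᵀ * X₁ = 0) :=
  isGramMate_fromBlocks_add_iff At Et X₁ X₂ X₃

theorem stmt8 (m₁ m₂ n₁ n₂ : ℕ)
    (Et At : Matrix (Fin m₁) (Fin n₁) ℝ)
    (X₁ : Matrix (Fin m₁) (Fin n₂) ℝ)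
    (X₂ : Matrix (Fin m₂) (Fin n₁) ℝ)
    (X₃ : Matrix (Fin m₂) (Fin n₂) ℝ)
    (hEt01 : ∀ i j, Et i j = 0 ∨ Et i j = 1 ∨ Et i j = -1)
    (hEt0 : Et ≠ 0)
    (hrow : (Matrix.fromBlocks Et 0 0 0 :
      Matrix (Fin m₁ ⊕ Fin m₂) (Fin n₁ ⊕ Fin n₂) ℝ) *ᵥ (fun _ => 1) = 0)
    (hcol : (fun _ => 1) ᵥ* (Matrix.fromBlocks Et 0 0 0 :
      Matrix (Fin m₁ ⊕ Fin m₂) (Fin n₁ ⊕ Fin n₂) ℝ) = 0)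
    (hA01 : ∀ i j, (Matrix.fromBlocks At X₁ X₂ X₃) i j = 0 ∨
      (Matrix.fromBlocks At X₁ X₂ X₃) i j = 1)
    (hAE01 : ∀ i j, (Matrix.fromBlocks At X₁ X₂ X₃ + Matrix.fromBlocks Et 0 0 0 :
        Matrix (Fin m₁ ⊕ Fin m₂) (Fin n₁ ⊕ Fin n₂) ℝ) i j = 0 ∨
      (Matrix.fromBlocks At X₁ X₂ X₃ + Matrix.fromBlocks Et 0 0 0 :
        Matrix (Fin m₁ ⊕ Fin m₂) (Fin n₁ ⊕ Fin n₂) ℝ) i j = 1) :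
    (let A := Matrix.fromBlocks At X₁ X₂ X₃
     let E : Matrix (Fin m₁ ⊕ Fin m₂) (Fin n₁ ⊕ Fin n₂) ℝ := Matrix.fromBlocks Et 0 0 0
     A * Aᵀ = (A + E) * (A + E)ᵀ ∧ Aᵀ * A = (A + E)ᵀ * (A + E) ∧ A ≠ A + E) ↔
    ((At * Atᵀ = (At + Et) * (At + Et)ᵀ ∧ Atᵀ * At = (At + Et)ᵀ * (At + Et) ∧
        At ≠ At + Et) ∧
      Et * X₂ᵀ = 0 ∧ Etᵀ * X₁ = 0) :=
  stmt8_general m₁ m₂ n₁ n₂ Et At X₁ X₂ X₃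
end

section
/- Let E = [[Ẽ, 0],[0, 0]] be a (0,1,−1) matrix with zero row and column sums. Then E is realizable (i.e., there exists a (0,1) matrix A such that A and A+E are Gram mates) if and only if Ẽ is realizable. -/
/-!
Realizability is a blockwise condition. If `A` realizes `E = fromBlocks F 0 0 0`, the upper-left
blocks of `A Aᵀ` and `Aᵀ A` are `A₁₁ A₁₁ᵀ + A₁₂ A₁₂ᵀ` and `A₁₁ᵀ A₁₁ + A₂₁ᵀ A₂₁`; adding `E` changes
`A₁₁` into `A₁₁ + F` but leaves `A₁₂` and `A₂₁` alone, so cancelling gives the Gram conditions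
for `A₁₁` and `F`. Conversely, a realizer `B` of `F` padded with zeros realizes `E`.
-/

open Matrix

/-- A (0,1,−1) matrix `F` with zero row and column sums is realizable if there is a
(0,1) matrix `A` such that `A + F` is a (0,1) matrix and `A`, `A + F` are Gram mates. -/
def Realizable {m n : Type*} [Fintype m] [Fintype n] (F : Matrix m n ℝ) : Prop :=
  ∃ A : Matrix m n ℝ, (∀ i j, A i j = 0 ∨ A i j = 1) ∧
    (∀ i j, (A + F) i j = 0 ∨ (A + F) i j = 1) ∧
    A * Aᵀ = (A + F) * (A + F)ᵀ ∧ Aᵀ * A = (A + F)ᵀ * (A + F) ∧ A ≠ A + F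

namespace Matrix

variable {α l m n o p q : Type*}

theorem toBlocks₁₁_mul [Fintype n] [Fintype o] [NonUnitalNonAssocSemiring α]
    (M : Matrix (l ⊕ m) (n ⊕ o) α) (N : Matrix (n ⊕ o) (p ⊕ q) α) :
    (M * N).toBlocks₁₁ = M.toBlocks₁₁ * N.toBlocks₁₁ + M.toBlocks₁₂ * N.toBlocks₂₁ := by
  rw [← fromBlocks_toBlocks M, ← fromBlocks_toBlocks N, fromBlocks_multiply]
  simp only [toBlocks_fromBlocks₁₁, toBlocks_fromBlocks₁₂, toBlocks_fromBlocks₂₁]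

theorem toBlocks₁₁_mul_transpose [Fintype n] [Fintype o] [NonUnitalNonAssocSemiring α]
    (M : Matrix (l ⊕ m) (n ⊕ o) α) :
    (M * Mᵀ).toBlocks₁₁ = M.toBlocks₁₁ * M.toBlocks₁₁ᵀ + M.toBlocks₁₂ * M.toBlocks₁₂ᵀ :=
  toBlocks₁₁_mul M Mᵀ

theorem toBlocks₁₁_transpose_mul [Fintype l] [Fintype m] [NonUnitalNonAssocSemiring α]
    (M : Matrix (l ⊕ m) (n ⊕ o) α) :
    (Mᵀ * M).toBlocks₁₁ = M.toBlocks₁₁ᵀ * M.toBlocks₁₁ + M.toBlocks₂₁ᵀ * M.toBlocks₂₁ :=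
  toBlocks₁₁_mul Mᵀ M

theorem fromBlocks_zero_mul_transpose [Fintype l] [Fintype m] [NonUnitalNonAssocSemiring α]
    (M : Matrix n l α) :
    (fromBlocks M 0 0 0 : Matrix (n ⊕ o) (l ⊕ m) α) *
        (fromBlocks M 0 0 0 : Matrix (n ⊕ o) (l ⊕ m) α)ᵀ
      = (fromBlocks (M * Mᵀ) 0 0 0 : Matrix (n ⊕ o) (n ⊕ o) α) := by
  rw [fromBlocks_transpose, fromBlocks_multiply]
  simp

theorem fromBlocks_zero_transpose_mul [Fintype n] [Fintype o] [NonUnitalNonAssocSemiring α]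
    (M : Matrix n l α) :
    (fromBlocks M 0 0 0 : Matrix (n ⊕ o) (l ⊕ m) α)ᵀ *
        (fromBlocks M 0 0 0 : Matrix (n ⊕ o) (l ⊕ m) α)
      = (fromBlocks (Mᵀ * M) 0 0 0 : Matrix (l ⊕ m) (l ⊕ m) α) := by
  rw [fromBlocks_transpose, fromBlocks_multiply]
  simp

theorem fromBlocks_zero_apply_eq_zero_or_eq_one [Zero α] [One α] {M : Matrix n l α}
    (hM : ∀ i j, M i j = 0 ∨ M i j = 1) (i : n ⊕ o) (j : l ⊕ m) :
    fromBlocks M 0 0 0 i j = 0 ∨ fromBlocks M 0 0 0 i j = 1 := by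
  rcases i with i | i <;> rcases j with j | j <;> simp [hM]

end Matrix

section

variable {m₁ m₂ n₁ n₂ : Type*} [Fintype m₁] [Fintype m₂] [Fintype n₁] [Fintype n₂]

theorem Realizable.of_fromBlocks {F : Matrix m₁ n₁ ℝ}
    (h : Realizable (fromBlocks F 0 0 0 : Matrix (m₁ ⊕ m₂) (n₁ ⊕ n₂) ℝ)) : Realizable F := by
  obtain ⟨A, hA, hAF, hrow, hcol, hne⟩ := h
  have h₁₂ : (A + fromBlocks F 0 0 0).toBlocks₁₂ = A.toBlocks₁₂ := by
    ext; simp [toBlocks₁₂]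
  have h₂₁ : (A + fromBlocks F 0 0 0).toBlocks₂₁ = A.toBlocks₂₁ := by
    ext; simp [toBlocks₂₁]
  refine ⟨A.toBlocks₁₁, fun i j => hA _ _, fun i j => hAF _ _, ?_, ?_, ?_⟩
  · have := congrArg toBlocks₁₁ hrow
    rw [toBlocks₁₁_mul_transpose, toBlocks₁₁_mul_transpose, h₁₂] at this
    exact add_right_cancel this
  · have := congrArg toBlocks₁₁ hcol
    rw [toBlocks₁₁_transpose_mul, toBlocks₁₁_transpose_mul, h₂₁] at this
    exact add_right_cancel this
  · intro hB
    apply hne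
    rw [left_eq_add] at hB ⊢
    rw [hB, fromBlocks_zero]

theorem Realizable.fromBlocks {F : Matrix m₁ n₁ ℝ} (h : Realizable F) :
    Realizable (Matrix.fromBlocks F 0 0 0 : Matrix (m₁ ⊕ m₂) (n₁ ⊕ n₂) ℝ) := by
  obtain ⟨B, hB, hBF, hrow, hcol, hne⟩ := h
  have hsum : (Matrix.fromBlocks B 0 0 0 + Matrix.fromBlocks F 0 0 0 :
      Matrix (m₁ ⊕ m₂) (n₁ ⊕ n₂) ℝ) = Matrix.fromBlocks (B + F) 0 0 0 := by
    simp only [fromBlocks_add, add_zero]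
  refine ⟨Matrix.fromBlocks B 0 0 0, fromBlocks_zero_apply_eq_zero_or_eq_one hB, ?_, ?_, ?_, ?_⟩
  · rw [hsum]
    exact fromBlocks_zero_apply_eq_zero_or_eq_one hBF
  · rw [hsum, fromBlocks_zero_mul_transpose, fromBlocks_zero_mul_transpose, hrow]
  · rw [hsum, fromBlocks_zero_transpose_mul, fromBlocks_zero_transpose_mul, hcol]
  · rw [hsum, Ne, fromBlocks_inj]
    exact fun h => hne h.1

theorem realizable_fromBlocks_iff {F : Matrix m₁ n₁ ℝ} :
    Realizable (fromBlocks F 0 0 0 : Matrix (m₁ ⊕ m₂) (n₁ ⊕ n₂) ℝ) ↔ Realizable F :=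
  ⟨Realizable.of_fromBlocks, Realizable.fromBlocks⟩

end

theorem stmt9_general (m₁ m₂ n₁ n₂ : ℕ)
    (Et : Matrix (Fin m₁) (Fin n₁) ℝ) :
    Realizable (Matrix.fromBlocks Et 0 0 0 :
      Matrix (Fin m₁ ⊕ Fin m₂) (Fin n₁ ⊕ Fin n₂) ℝ) ↔ Realizable Et :=
  realizable_fromBlocks_iff

theorem stmt9 (m₁ m₂ n₁ n₂ : ℕ)
    (Et : Matrix (Fin m₁) (Fin n₁) ℝ)
    (hEt01 : ∀ i j, Et i j = 0 ∨ Et i j = 1 ∨ Et i j = -1)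
    (hEt0 : Et ≠ 0)
    (hrow : Et *ᵥ (fun _ => 1) = 0)
    (hcol : (fun _ => 1) ᵥ* Et = 0) :
    Realizable (Matrix.fromBlocks Et 0 0 0 :
      Matrix (Fin m₁ ⊕ Fin m₂) (Fin n₁ ⊕ Fin n₂) ℝ) ↔ Realizable Et :=
  stmt9_general m₁ m₂ n₁ n₂ Et
end

section
/- Every (0,1,−1) matrix E of rank 1 with zero row sums and zero column sums is realizable: there exists a (0,1) matrix A such that A+E is a (0,1) matrix and A, A+E are Gram mates. Moreover, for any such pair, (2A+E)Eᵀ = 0. -/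
/-!
Since `E` has rank one with a nonzero `±1` entry, `E = u wᵀ` with `u`, `w` vectors of entries
`0, ±1` summing to zero, so `∑ wⱼ³ = ∑ wⱼ = 0` and likewise for `u`. Taking `A` to mark the `-1`
entries of `E`, i.e. `A = (E∘E - E)/2`, one gets `(A+E)(A+E)ᵀ - AAᵀ = (E (E∘E)ᵀ + (E∘E) Eᵀ)/2`,
whose entries are multiples of `∑ wⱼ³`; the same holds for `AᵀA`.

Conversely, with `a = A w`, the Gram condition `AAᵀ = (A+E)(A+E)ᵀ` reads
`a uᵀ + u aᵀ + (w ⬝ w) u uᵀ = 0`. Comparing with a column where `u` is nonzero shows `a ∥ u`, so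
`a uᵀ = u aᵀ` and `(2A + E)Eᵀ = 2 a uᵀ + (w ⬝ w) u uᵀ` vanishes.
-/

open Matrix

namespace Matrix

variable {m n K : Type*} [Field K]

theorem exists_eq_vecMulVec_of_rank_le_one [Fintype m] [Fintype n] {E : Matrix m n K}
    (h : E.rank ≤ 1) : ∃ (u : m → K) (w : n → K), E = vecMulVec u w := by
  classical
  obtain ⟨v, hv⟩ := finrank_le_one_iff.mp h
  have hcol : ∀ j, ∃ c : K, c • (v : m → K) = fun i => E i j := fun j => by
    obtain ⟨c, hc⟩ := hv ⟨fun i => E i j, Pi.single j 1, by ext; simp [mulVec_single]⟩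
    exact ⟨c, congrArg Subtype.val hc⟩
  choose c hc using hcol
  exact ⟨v, c, by ext i j; simp [vecMulVec_apply, ← congrFun (hc j) i, mul_comm]⟩

theorem eq_vecMulVec_col_inv_smul_row [Fintype m] [Fintype n] {E : Matrix m n K}
    (h : E.rank ≤ 1) {i₀ : m} {j₀ : n} (h₀ : E i₀ j₀ ≠ 0) :
    E = vecMulVec (fun i => E i j₀) ((E i₀ j₀)⁻¹ • E i₀) := by
  obtain ⟨u, w, rfl⟩ := exists_eq_vecMulVec_of_rank_le_one h
  obtain ⟨hu, hw⟩ := mul_ne_zero_iff.mp h₀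
  ext i j
  simp only [vecMulVec_apply, Pi.smul_apply, smul_eq_mul]
  field_simp

theorem exists_eq_smul_of_vecMulVec_eq {a b u : m → K} (hu : u ≠ 0)
    (h : vecMulVec a u = vecMulVec u b) : ∃ t : K, a = t • u := by
  obtain ⟨i₀, hi₀⟩ : ∃ i₀, u i₀ ≠ 0 := Function.ne_iff.mp hu
  refine ⟨b i₀ / u i₀, funext fun i => ?_⟩
  have := congrFun (congrFun h i) i₀
  simp only [vecMulVec_apply, Pi.smul_apply, smul_eq_mul] at this ⊢
  field_simp
  linear_combination this

/-- For a `(0, ±1)`-matrix `E` this is the `(0, 1)`-matrix marking the entries `-1` of `E`. -/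
def negOnePart (E : Matrix m n K) : Matrix m n K :=
  E.map fun x => (x ^ 2 - x) / 2

theorem negOnePart_transpose (E : Matrix m n K) : (negOnePart E)ᵀ = negOnePart Eᵀ :=
  transpose_map.symm

theorem negOnePart_mul_transpose_of_sum_pow_three_eq_zero [Fintype n] [NeZero (2 : K)]
    (u : m → K) {w : n → K} (hw : ∑ j, w j ^ 3 = 0) :
    negOnePart (vecMulVec u w) * (negOnePart (vecMulVec u w))ᵀ =
      (negOnePart (vecMulVec u w) + vecMulVec u w) *
        (negOnePart (vecMulVec u w) + vecMulVec u w)ᵀ := by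
  ext i k
  simp only [negOnePart, mul_apply, add_apply, transpose_apply, map_apply, vecMulVec_apply]
  rw [eq_comm, ← sub_eq_zero, ← Finset.sum_sub_distrib]
  calc _ = ∑ j, (u i ^ 2 * u k + u i * u k ^ 2) / 2 * w j ^ 3 := by
        refine Finset.sum_congr rfl fun j _ => ?_
        field_simp
        ring
    _ = 0 := by rw [← Finset.mul_sum, hw, mul_zero]

theorem two_smul_add_mul_transpose_eq_zero [Fintype n] {u : m → K} {w : n → K} (hu : u ≠ 0)
    {A : Matrix m n K} (h : A * Aᵀ = (A + vecMulVec u w) * (A + vecMulVec u w)ᵀ) :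
    ((2 : K) • A + vecMulVec u w) * (vecMulVec u w)ᵀ = 0 := by
  set a := A *ᵥ w
  have hexp : (A + vecMulVec u w) * (A + vecMulVec u w)ᵀ =
      A * Aᵀ + (vecMulVec a u + vecMulVec u a + vecMulVec u ((w ⬝ᵥ w) • u)) := by
    rw [transpose_add, transpose_vecMulVec, Matrix.add_mul, Matrix.mul_add, Matrix.mul_add,
      mul_vecMulVec, vecMulVec_mul, vecMul_transpose, vecMulVec_mul_vecMulVec]
    abel
  rw [hexp, left_eq_add] at h
  obtain ⟨t, ht⟩ := exists_eq_smul_of_vecMulVec_eq (b := -(a + (w ⬝ᵥ w) • u)) hu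
    (by rw [vecMulVec_neg, vecMulVec_add, ← sub_eq_zero, sub_neg_eq_add, ← h]; abel)
  have hsymm : vecMulVec u a = vecMulVec a u := by
    rw [ht, smul_vecMulVec, vecMulVec_smul]
  rw [transpose_vecMulVec, Matrix.add_mul, Matrix.smul_mul, mul_vecMulVec, vecMulVec_mul_vecMulVec,
    two_smul, ← h, hsymm]

end Matrix

theorem stmt13 (m n : ℕ) (E : Matrix (Fin m) (Fin n) ℝ)
    (hE : ∀ i j, E i j = 0 ∨ E i j = 1 ∨ E i j = -1)
    (hrank : E.rank = 1)
    (hrow : E *ᵥ (fun _ => 1) = 0)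
    (hcol : (fun _ => 1) ᵥ* E = 0) :
    (∃ A : Matrix (Fin m) (Fin n) ℝ, (∀ i j, A i j = 0 ∨ A i j = 1) ∧
      (∀ i j, (A + E) i j = 0 ∨ (A + E) i j = 1) ∧
      A * Aᵀ = (A + E) * (A + E)ᵀ ∧ Aᵀ * A = (A + E)ᵀ * (A + E)) ∧
    (∀ A : Matrix (Fin m) (Fin n) ℝ, (∀ i j, A i j = 0 ∨ A i j = 1) →
      (∀ i j, (A + E) i j = 0 ∨ (A + E) i j = 1) →
      A * Aᵀ = (A + E) * (A + E)ᵀ → Aᵀ * A = (A + E)ᵀ * (A + E) →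
      ((2 : ℝ) • A + E) * Eᵀ = 0) := by
  have hcube : ∀ i j, E i j ^ 3 = E i j := fun i j => by
    rcases hE i j with h | h | h <;> rw [h] <;> norm_num
  obtain ⟨i₀, j₀, h₀⟩ : ∃ i j, E i j ≠ 0 := by
    by_contra! h
    rw [show E = 0 from ext h, rank_zero] at hrank
    exact zero_ne_one hrank
  have hfac := eq_vecMulVec_col_inv_smul_row hrank.le h₀
  set u : Fin m → ℝ := fun i => E i j₀
  set w : Fin n → ℝ := (E i₀ j₀)⁻¹ • E i₀
  have hu : ∑ i, u i ^ 3 = 0 := by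
    simpa [u, hcube, vecMul, dotProduct] using congrFun hcol j₀
  have hw : ∑ j, w j ^ 3 = 0 := by
    have := congrFun hrow i₀
    simp only [mulVec, dotProduct, mul_one, Pi.zero_apply] at this
    simp [w, mul_pow, inv_pow, hcube, ← Finset.mul_sum, this]
  refine ⟨⟨negOnePart E, fun i j => ?_, fun i j => ?_, ?_, ?_⟩, ?_⟩
  · rcases hE i j with h | h | h <;> simp [negOnePart, h]
  · rcases hE i j with h | h | h <;> simp [negOnePart, h]
  · rw [hfac]
    exact negOnePart_mul_transpose_of_sum_pow_three_eq_zero u hw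
  · have := negOnePart_mul_transpose_of_sum_pow_three_eq_zero w hu
    rw [← transpose_vecMulVec, ← negOnePart_transpose, ← hfac] at this
    simpa [transpose_add] using this
  · intro A _ _ hgram _
    rw [hfac] at hgram ⊢
    exact two_smul_add_mul_transpose_eq_zero (Function.ne_iff.mpr ⟨i₀, h₀⟩) hgram
end

section
/- Let R = (r,…,r) be of length m and S = (s,…,s) of length n, with r, s nonnegative integers, m ≥ s, and n ≥ r. Then rm = sn if and only if there exists an m×n (0,1) matrix with all row sums equal to r and all column sums equal to s. -/
/-!
Necessity is double counting: both `r * m` and `s * n` are the sum of all entries.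
For sufficiency, write the numbers `0, …, m r - 1` row by row into an `m × r` array and send the
number `t` to column `t mod n` of the same row. A row holds `r ≤ n` consecutive numbers, so they
land in distinct columns, and column `j` receives the `m r / n = s` numbers `t < m r` with
`t ≡ j [MOD n]`.
-/

open Finset Function

section IncidenceCount

variable {α ι κ : Type*} [Fintype α] [DecidableEq ι] [DecidableEq κ]

def incidenceCount (f : α → ι) (g : α → κ) : Matrix ι κ ℕ :=
  Matrix.of fun i j => #{a | f a = i ∧ g a = j}

lemma sum_incidenceCount_row [Fintype κ] (f : α → ι) (g : α → κ) (i : ι) :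
    ∑ j, incidenceCount f g i j = #{a | f a = i} := by
  rw [card_eq_sum_card_fiberwise (f := g) (t := univ) (by simp)]
  simp [incidenceCount, filter_filter]

lemma sum_incidenceCount_col [Fintype ι] (f : α → ι) (g : α → κ) (j : κ) :
    ∑ i, incidenceCount f g i j = #{a | g a = j} := by
  rw [card_eq_sum_card_fiberwise (f := f) (t := univ) (by simp)]
  simp [incidenceCount, filter_filter, and_comm]

lemma incidenceCount_le_one {f : α → ι} {g : α → κ} (h : Injective fun a => (f a, g a))
    (i : ι) (j : κ) : incidenceCount f g i j ≤ 1 :=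
  card_le_one.2 fun _ _ _ _ => h (by simp_all)

end IncidenceCount

lemma card_nsmul_eq_of_line_sums {ι κ R : Type*} [Fintype ι] [Fintype κ] [AddCommMonoid R]
    (A : Matrix ι κ R) {a b : R} (hrow : ∀ i, ∑ j, A i j = a) (hcol : ∀ j, ∑ i, A i j = b) :
    Fintype.card ι • a = Fintype.card κ • b := by
  simpa [hrow, hcol] using Finset.sum_comm (s := univ) (t := univ) (f := fun i j => A i j)

lemma Fin.card_filter_val {N : ℕ} (p : ℕ → Prop) [DecidablePred p] :
    #{t : Fin N | p t} = Nat.count p N := by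
  rw [Nat.count_eq_card_filter_range, ← Nat.Iio_eq_range, ← Fin.map_valEmbedding_univ,
    filter_map, card_map]
  rfl

lemma card_filter_fst_eq {m r : ℕ} (i : Fin m) : #{p : Fin m × Fin r | p.1 = i} = r := by
  rw [show ({p : Fin m × Fin r | p.1 = i} : Finset _) = {i} ×ˢ univ by
    ext ⟨a, b⟩; simp only [mem_filter, mem_univ, true_and, mem_product, mem_singleton, and_true],
    card_product]
  simp

/-- The cell `(i, k)` of the `m × r` array holds the number `r * i + k`. -/
def cyclicColumn {m r n : ℕ} (hn : 0 < n) (p : Fin m × Fin r) : Fin n :=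
  ⟨finProdFinEquiv p % n, Nat.mod_lt _ hn⟩

section CyclicColumn

variable {m r n : ℕ} (hn : 0 < n)

lemma injective_fst_cyclicColumn (hr : r ≤ n) :
    Injective fun p : Fin m × Fin r => (p.1, cyclicColumn hn p) := by
  rintro ⟨i, k⟩ ⟨i', k'⟩ h
  simp only [Prod.mk.injEq, cyclicColumn, Fin.mk.injEq, finProdFinEquiv_apply_val] at h
  obtain ⟨rfl, h⟩ := h
  have hkk' : (k : ℕ) ≡ k' [MOD n] := Nat.ModEq.add_right_cancel' _ h
  simp [Fin.ext_iff, hkk'.eq_of_lt_of_lt (by omega) (by omega)]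

lemma card_cyclicColumn_eq {s : ℕ} (h : r * m = s * n) (j : Fin n) :
    #{p : Fin m × Fin r | cyclicColumn hn p = j} = s := by
  have hmod (t : ℕ) : t % n = j ↔ t ≡ j [MOD n] := by
    rw [Nat.ModEq, Nat.mod_eq_of_lt j.isLt]
  calc #{p : Fin m × Fin r | cyclicColumn hn p = j}
      = #{t : Fin (m * r) | t % n = j} :=
        card_equiv finProdFinEquiv (by simp [cyclicColumn, Fin.ext_iff])
    _ = Nat.count (· ≡ j [MOD n]) (m * r) := by
        simp only [hmod]; exact Fin.card_filter_val (· ≡ j [MOD n])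
    _ = s := by
        rw [Nat.count_modEq_card _ hn, mul_comm, h, Nat.mul_mod_left, Nat.mul_div_cancel _ hn]
        simp

end CyclicColumn

theorem stmt15_general (m n r s : ℕ) (hn : 0 < n) (hr : r ≤ n) :
    r * m = s * n ↔
    ∃ A : Matrix (Fin m) (Fin n) ℝ, (∀ i j, A i j = 0 ∨ A i j = 1) ∧
      (∀ i, ∑ j, A i j = (r : ℝ)) ∧ (∀ j, ∑ i, A i j = (s : ℝ)) := by
  constructor
  · intro h
    let C := incidenceCount Prod.fst (cyclicColumn (m := m) (r := r) hn)
    refine ⟨C.map (↑), fun i j => ?_, fun i => ?_, fun j => ?_⟩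
    · simpa using Nat.le_one_iff_eq_zero_or_eq_one.1
        (incidenceCount_le_one (injective_fst_cyclicColumn hn hr) i j)
    · simp [C, ← Nat.cast_sum, sum_incidenceCount_row, card_filter_fst_eq]
    · simp [C, ← Nat.cast_sum, sum_incidenceCount_col, card_cyclicColumn_eq hn h]
  · rintro ⟨A, -, hrow, hcol⟩
    have hcount := card_nsmul_eq_of_line_sums A hrow hcol
    simp only [Fintype.card_fin, nsmul_eq_mul] at hcount
    rw [mul_comm, mul_comm s]
    exact_mod_cast hcount

theorem stmt15 (m n r s : ℕ) (hm : 0 < m) (hn : 0 < n) (hs : s ≤ m) (hr : r ≤ n) :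
    r * m = s * n ↔
    ∃ A : Matrix (Fin m) (Fin n) ℝ, (∀ i j, A i j = 0 ∨ A i j = 1) ∧
      (∀ i, ∑ j, A i j = (r : ℝ)) ∧ (∀ j, ∑ i, A i j = (s : ℝ)) :=
  stmt15_general m n r s hn hr
end

section
/- Let m₁, m₂, n₁, n₂ be positive integers such that m₁+m₂ and n₁+n₂ are even. Then there exists an (m₁+m₂)×(n₁+n₂) (0,1) matrix X, partitioned as [[X₁₁, X₁₂],[X₂₁, X₂₂]] with X₁₁ of size m₁×n₁, such that X·(𝟙_{n₁}; −𝟙_{n₂}) = ((n₁−n₂)/2)·𝟙_{m₁+m₂} and Xᵀ·(𝟙_{m₁}; −𝟙_{m₂}) = ((m₁−m₂)/2)·𝟙_{n₁+n₂}. -/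
open Matrix

private def w (a b : ℕ) : Fin a ⊕ Fin b → ℝ :=
  Sum.elim (fun i => (-1)^(i:ℕ)) (fun i => -(-1)^(a+(i:ℕ)))

private lemma w_pm (a b : ℕ) (x : Fin a ⊕ Fin b) : w a b x = 1 ∨ w a b x = -1 := by
  rcases x with i | i <;> simp only [w, Sum.elim_inl, Sum.elim_inr] <;>
    rcases Nat.even_or_odd ((i:ℕ)) with h | h
  · exact Or.inl h.neg_one_pow
  · exact Or.inr h.neg_one_pow
  · rcases Nat.even_or_odd (a + (i:ℕ)) with h2 | h2
    · right; rw [h2.neg_one_pow]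
    · left; rw [h2.neg_one_pow]; ring
  · rcases Nat.even_or_odd (a + (i:ℕ)) with h2 | h2
    · right; rw [h2.neg_one_pow]
    · left; rw [h2.neg_one_pow]; ring

private lemma w_sum (a b : ℕ) (hab : Even (a+b)) :
    ∑ x : Fin a ⊕ Fin b, w a b x * Sum.elim (fun _ => (1:ℝ)) (fun _ => -1) x = 0 := by
  rw [Fintype.sum_sum_type]
  simp only [w, Sum.elim_inl, Sum.elim_inr, mul_one, mul_neg, neg_neg, pow_add]
  rw [← Finset.mul_sum]
  simp only [Fin.sum_univ_eq_sum_range]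
  rw [neg_one_geom_sum, neg_one_geom_sum]
  rcases Nat.even_or_odd a with h | h
  · have hb : Even b := (Nat.even_add.mp hab).mp h
    simp [h, hb]
  · have hb : Odd b := by
      rcases Nat.even_or_odd b with hb | hb
      · exact absurd ((Nat.even_add.mp hab).mpr hb) (Nat.not_even_iff_odd.mpr h)
      · exact hb
    simp [Nat.not_even_iff_odd.mpr h, Nat.not_even_iff_odd.mpr hb, h.neg_one_pow]

private lemma s_sum (a b : ℕ) :
    ∑ x : Fin a ⊕ Fin b, Sum.elim (fun _ => (1:ℝ)) (fun _ => -1) x = (a:ℝ) - b := by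
  rw [Fintype.sum_sum_type]
  simp [Finset.sum_const]
  ring

theorem stmt16 (m₁ m₂ n₁ n₂ : ℕ)
    (hm₁ : 0 < m₁) (hm₂ : 0 < m₂) (hn₁ : 0 < n₁) (hn₂ : 0 < n₂)
    (hm : Even (m₁ + m₂)) (hn : Even (n₁ + n₂)) :
    ∃ X : Matrix (Fin m₁ ⊕ Fin m₂) (Fin n₁ ⊕ Fin n₂) ℝ,
      (∀ i j, X i j = 0 ∨ X i j = 1) ∧
      X *ᵥ (Sum.elim (fun _ => 1) (fun _ => -1)) = (fun _ => ((n₁ : ℝ) - n₂) / 2) ∧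
      Xᵀ *ᵥ (Sum.elim (fun _ => 1) (fun _ => -1)) = (fun _ => ((m₁ : ℝ) - m₂) / 2) := by
  refine ⟨Matrix.of fun i j => (1 + w m₁ m₂ i * w n₁ n₂ j) / 2, ?_, ?_, ?_⟩
  · intro i j
    rcases w_pm m₁ m₂ i with h1 | h1 <;> rcases w_pm n₁ n₂ j with h2 | h2 <;>
      simp [h1, h2] <;> norm_num
  · funext i
    simp only [mulVec, dotProduct, Matrix.of_apply]
    have : ∀ j : Fin n₁ ⊕ Fin n₂,
        (1 + w m₁ m₂ i * w n₁ n₂ j) / 2 * Sum.elim (fun _ => (1:ℝ)) (fun _ => -1) j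
        = Sum.elim (fun _ => (1:ℝ)) (fun _ => -1) j / 2
          + (w m₁ m₂ i / 2) * (w n₁ n₂ j * Sum.elim (fun _ => (1:ℝ)) (fun _ => -1) j) := by
      intro j; ring
    rw [Finset.sum_congr rfl (fun j _ => this j), Finset.sum_add_distrib,
      ← Finset.sum_div, ← Finset.mul_sum, s_sum, w_sum _ _ hn]
    ring
  · funext j
    simp only [mulVec, transpose_apply, dotProduct, Matrix.of_apply]
    have : ∀ i : Fin m₁ ⊕ Fin m₂,
        (1 + w m₁ m₂ i * w n₁ n₂ j) / 2 * Sum.elim (fun _ => (1:ℝ)) (fun _ => -1) i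
        = Sum.elim (fun _ => (1:ℝ)) (fun _ => -1) i / 2
          + (w n₁ n₂ j / 2) * (w m₁ m₂ i * Sum.elim (fun _ => (1:ℝ)) (fun _ => -1) i) := by
      intro i; ring
    rw [Finset.sum_congr rfl (fun i _ => this i), Finset.sum_add_distrib,
      ← Finset.sum_div, ← Finset.mul_sum, s_sum, w_sum _ _ hm]
    ring
end

section
/- If (A₁, B₁) and (A₂, B₂) are pairs of Gram mates, then the block diagonal matrices diag(A₁, A₂) and diag(B₁, B₂) are Gram mates, and the matrices [[A₁, J],[J, A₂]] and [[B₁, J],[J, B₂]] (with all-ones off-diagonal blocks of appropriate sizes) are Gram mates. -/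
/-!
For a matrix whose entries are idempotent (e.g. a (0,1) matrix), the diagonal of `A * Aᵀ`
lists the row sums of `A`, and the diagonal of `Aᵀ * A` its column sums. Gram mates therefore
have the same row sums and the same column sums, i.e. `A * J = B * J` and `J * A = J * B`
for all-ones matrices `J`. These are exactly the cross terms that appear when the Gram matrices
of `[[A₁, J], [J, A₂]]` are expanded blockwise; in the block diagonal case the cross terms vanish.
-/

open Matrix

namespace Matrix

variable {m n m' n' p R : Type*}

@[simp]
theorem transpose_of_const (c : R) : (of fun _ _ => c : Matrix m n R)ᵀ = of fun _ _ => c := rfl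

section RowSums

variable [Fintype n] [Semiring R]

theorem sum_row_eq_of_mul_transpose_eq {A B : Matrix m n R}
    (hA : ∀ i j, IsIdempotentElem (A i j)) (hB : ∀ i j, IsIdempotentElem (B i j))
    (h : A * Aᵀ = B * Bᵀ) (i : m) : ∑ j, A i j = ∑ j, B i j := by
  calc ∑ j, A i j = (A * Aᵀ) i i := by simp only [mul_apply, transpose_apply, (hA i _).eq]
    _ = (B * Bᵀ) i i := by rw [h]
    _ = ∑ j, B i j := by simp only [mul_apply, transpose_apply, (hB i _).eq]

theorem mul_ones_eq_of_mul_transpose_eq {A B : Matrix m n R}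
    (hA : ∀ i j, IsIdempotentElem (A i j)) (hB : ∀ i j, IsIdempotentElem (B i j))
    (h : A * Aᵀ = B * Bᵀ) :
    A * (of fun _ _ => 1 : Matrix n p R) = B * (of fun _ _ => 1 : Matrix n p R) := by
  ext i k
  simpa only [mul_apply, of_apply, mul_one] using sum_row_eq_of_mul_transpose_eq hA hB h i

end RowSums

variable [CommSemiring R]

theorem ones_mul_eq_of_transpose_mul_eq [Fintype n] {A B : Matrix n m R}
    (hA : ∀ i j, IsIdempotentElem (A i j)) (hB : ∀ i j, IsIdempotentElem (B i j))
    (h : Aᵀ * A = Bᵀ * B) :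
    (of fun _ _ => 1 : Matrix p n R) * A = (of fun _ _ => 1 : Matrix p n R) * B := by
  have := mul_ones_eq_of_mul_transpose_eq (p := p) (A := Aᵀ) (B := Bᵀ)
    (fun i j => hA j i) (fun i j => hB j i) (by simpa only [transpose_transpose] using h)
  simpa only [transpose_mul, transpose_transpose, transpose_of_const] using
    congrArg transpose this

theorem fromBlocks_mul_transpose_eq [Fintype n] [Fintype n'] {A₁ B₁ : Matrix m n R}
    {A₂ B₂ : Matrix m' n' R} (C : Matrix m n' R) (D : Matrix m' n R)
    (h₁ : A₁ * A₁ᵀ = B₁ * B₁ᵀ) (h₂ : A₂ * A₂ᵀ = B₂ * B₂ᵀ)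
    (hD : A₁ * Dᵀ = B₁ * Dᵀ) (hC : A₂ * Cᵀ = B₂ * Cᵀ) :
    fromBlocks A₁ C D A₂ * (fromBlocks A₁ C D A₂)ᵀ =
      fromBlocks B₁ C D B₂ * (fromBlocks B₁ C D B₂)ᵀ := by
  have hD' : D * A₁ᵀ = D * B₁ᵀ := by
    simpa only [transpose_mul, transpose_transpose] using congrArg transpose hD
  have hC' : C * A₂ᵀ = C * B₂ᵀ := by
    simpa only [transpose_mul, transpose_transpose] using congrArg transpose hC
  simp only [fromBlocks_transpose, fromBlocks_multiply, h₁, h₂, hC, hD, hC', hD']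

theorem fromBlocks_transpose_mul_eq [Fintype m] [Fintype m'] {A₁ B₁ : Matrix m n R}
    {A₂ B₂ : Matrix m' n' R} (C : Matrix m n' R) (D : Matrix m' n R)
    (h₁ : A₁ᵀ * A₁ = B₁ᵀ * B₁) (h₂ : A₂ᵀ * A₂ = B₂ᵀ * B₂)
    (hC : Cᵀ * A₁ = Cᵀ * B₁) (hD : Dᵀ * A₂ = Dᵀ * B₂) :
    (fromBlocks A₁ C D A₂)ᵀ * fromBlocks A₁ C D A₂ =
      (fromBlocks B₁ C D B₂)ᵀ * fromBlocks B₁ C D B₂ := by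
  have := fromBlocks_mul_transpose_eq (A₁ := A₁ᵀ) (B₁ := B₁ᵀ) (A₂ := A₂ᵀ) (B₂ := B₂ᵀ) Dᵀ Cᵀ
    (by simpa only [transpose_transpose] using h₁) (by simpa only [transpose_transpose] using h₂)
    (by simpa only [transpose_mul, transpose_transpose] using congrArg transpose hC)
    (by simpa only [transpose_mul, transpose_transpose] using congrArg transpose hD)
  simpa only [fromBlocks_transpose, transpose_transpose] using this

end Matrix

theorem stmt17_general (m₁ n₁ m₂ n₂ : ℕ)
    (A₁ B₁ : Matrix (Fin m₁) (Fin n₁) ℝ) (A₂ B₂ : Matrix (Fin m₂) (Fin n₂) ℝ)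
    (hA₁ : ∀ i j, A₁ i j = 0 ∨ A₁ i j = 1) (hB₁ : ∀ i j, B₁ i j = 0 ∨ B₁ i j = 1)
    (hA₂ : ∀ i j, A₂ i j = 0 ∨ A₂ i j = 1) (hB₂ : ∀ i j, B₂ i j = 0 ∨ B₂ i j = 1)
    (h1 : A₁ * A₁ᵀ = B₁ * B₁ᵀ) (h1' : A₁ᵀ * A₁ = B₁ᵀ * B₁) (hne₁ : A₁ ≠ B₁)
    (h2 : A₂ * A₂ᵀ = B₂ * B₂ᵀ) (h2' : A₂ᵀ * A₂ = B₂ᵀ * B₂) :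
    (let A := Matrix.fromBlocks A₁ 0 0 A₂
     let B := Matrix.fromBlocks B₁ 0 0 B₂
     A * Aᵀ = B * Bᵀ ∧ Aᵀ * A = Bᵀ * B ∧ A ≠ B) ∧
    (let A := Matrix.fromBlocks A₁ (Matrix.of fun _ _ => 1) (Matrix.of fun _ _ => 1) A₂
     let B := Matrix.fromBlocks B₁ (Matrix.of fun _ _ => 1) (Matrix.of fun _ _ => 1) B₂
     A * Aᵀ = B * Bᵀ ∧ Aᵀ * A = Bᵀ * B ∧ A ≠ B) := by
  have idem {a b : ℕ} {M : Matrix (Fin a) (Fin b) ℝ} (hM : ∀ i j, M i j = 0 ∨ M i j = 1) :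
      ∀ i j, IsIdempotentElem (M i j) := fun i j => by
    rcases hM i j with h | h <;> rw [h]
    exacts [.zero, .one]
  have ne {X Y Z W} : fromBlocks A₁ X Y A₂ ≠ fromBlocks B₁ Z W B₂ :=
    fun h => hne₁ (fromBlocks_inj.1 h).1
  refine ⟨⟨?_, ?_, ne⟩, ⟨?_, ?_, ne⟩⟩
  · exact fromBlocks_mul_transpose_eq 0 0 h1 h2 (by simp) (by simp)
  · exact fromBlocks_transpose_mul_eq 0 0 h1' h2' (by simp) (by simp)
  · exact fromBlocks_mul_transpose_eq _ _ h1 h2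
      (mul_ones_eq_of_mul_transpose_eq (idem hA₁) (idem hB₁) h1)
      (mul_ones_eq_of_mul_transpose_eq (idem hA₂) (idem hB₂) h2)
  · exact fromBlocks_transpose_mul_eq _ _ h1' h2'
      (ones_mul_eq_of_transpose_mul_eq (idem hA₁) (idem hB₁) h1')
      (ones_mul_eq_of_transpose_mul_eq (idem hA₂) (idem hB₂) h2')

theorem stmt17 (m₁ n₁ m₂ n₂ : ℕ)
    (A₁ B₁ : Matrix (Fin m₁) (Fin n₁) ℝ) (A₂ B₂ : Matrix (Fin m₂) (Fin n₂) ℝ)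
    (hA₁ : ∀ i j, A₁ i j = 0 ∨ A₁ i j = 1) (hB₁ : ∀ i j, B₁ i j = 0 ∨ B₁ i j = 1)
    (hA₂ : ∀ i j, A₂ i j = 0 ∨ A₂ i j = 1) (hB₂ : ∀ i j, B₂ i j = 0 ∨ B₂ i j = 1)
    (h1 : A₁ * A₁ᵀ = B₁ * B₁ᵀ) (h1' : A₁ᵀ * A₁ = B₁ᵀ * B₁) (hne₁ : A₁ ≠ B₁)
    (h2 : A₂ * A₂ᵀ = B₂ * B₂ᵀ) (h2' : A₂ᵀ * A₂ = B₂ᵀ * B₂) (hne₂ : A₂ ≠ B₂) :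
    (let A := Matrix.fromBlocks A₁ 0 0 A₂
     let B := Matrix.fromBlocks B₁ 0 0 B₂
     A * Aᵀ = B * Bᵀ ∧ Aᵀ * A = Bᵀ * B ∧ A ≠ B) ∧
    (let A := Matrix.fromBlocks A₁ (Matrix.of fun _ _ => 1) (Matrix.of fun _ _ => 1) A₂
     let B := Matrix.fromBlocks B₁ (Matrix.of fun _ _ => 1) (Matrix.of fun _ _ => 1) B₂
     A * Aᵀ = B * Bᵀ ∧ Aᵀ * A = Bᵀ * B ∧ A ≠ B) :=
  stmt17_general m₁ n₁ m₂ n₂ A₁ B₁ A₂ B₂ hA₁ hB₁ hA₂ hB₂ h1 h1' hne₁ h2 h2'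
end

section
/- If (A₁, B₁) and (A₂, B₂) are pairs of Gram mates, then the Kronecker products A₁ ⊗ A₂ and B₁ ⊗ B₂ are Gram mates. -/
open Matrix Kronecker

theorem stmt18 (m₁ n₁ m₂ n₂ : ℕ)
    (A₁ B₁ : Matrix (Fin m₁) (Fin n₁) ℝ) (A₂ B₂ : Matrix (Fin m₂) (Fin n₂) ℝ)
    (hA₁ : ∀ i j, A₁ i j = 0 ∨ A₁ i j = 1) (hB₁ : ∀ i j, B₁ i j = 0 ∨ B₁ i j = 1)
    (hA₂ : ∀ i j, A₂ i j = 0 ∨ A₂ i j = 1) (hB₂ : ∀ i j, B₂ i j = 0 ∨ B₂ i j = 1)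
    (h1 : A₁ * A₁ᵀ = B₁ * B₁ᵀ) (h1' : A₁ᵀ * A₁ = B₁ᵀ * B₁) (hne₁ : A₁ ≠ B₁)
    (h2 : A₂ * A₂ᵀ = B₂ * B₂ᵀ) (h2' : A₂ᵀ * A₂ = B₂ᵀ * B₂) (hne₂ : A₂ ≠ B₂) :
    (A₁ ⊗ₖ A₂) * (A₁ ⊗ₖ A₂)ᵀ = (B₁ ⊗ₖ B₂) * (B₁ ⊗ₖ B₂)ᵀ ∧
    (A₁ ⊗ₖ A₂)ᵀ * (A₁ ⊗ₖ A₂) = (B₁ ⊗ₖ B₂)ᵀ * (B₁ ⊗ₖ B₂) ∧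
    A₁ ⊗ₖ A₂ ≠ B₁ ⊗ₖ B₂ := by
  have ht : ∀ (p q : ℕ) (M : Matrix (Fin p) (Fin q) ℝ), (Mᵀ : Matrix _ _ ℝ) = Mᴴ := by
    intro p q M
    ext i j; simp [Matrix.conjTranspose_apply]
  -- A₂ ≠ 0 and B₂ ≠ 0
  have hA2ne : A₂ ≠ 0 := by
    intro h
    apply hne₂
    have : B₂ * B₂ᴴ = 0 := by rw [← ht, ← h2, h, Matrix.zero_mul]
    rw [Matrix.self_mul_conjTranspose_eq_zero] at this
    rw [h, this]
  have hB2ne : B₂ ≠ 0 := by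
    intro h
    apply hne₂
    have : A₂ * A₂ᴴ = 0 := by rw [← ht, h2, h, Matrix.zero_mul]
    rw [Matrix.self_mul_conjTranspose_eq_zero] at this
    rw [h, this]
  refine ⟨?_, ?_, ?_⟩
  · rw [← Matrix.kroneckerMap_transpose, ← Matrix.kroneckerMap_transpose,
      ← Matrix.mul_kronecker_mul, h1, h2, Matrix.mul_kronecker_mul]
  · rw [← Matrix.kroneckerMap_transpose, ← Matrix.kroneckerMap_transpose,
      ← Matrix.mul_kronecker_mul, h1', h2', Matrix.mul_kronecker_mul]
  · intro h
    apply hne₁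
    -- find entry where A₁ differs from B₁ leads to contradiction
    by_contra hne
    obtain ⟨i, j, hij⟩ : ∃ i j, A₁ i j ≠ B₁ i j := by
      by_contra hc
      push_neg at hc
      exact hne (Matrix.ext hc)
    have hentry : ∀ k l, A₁ i j * A₂ k l = B₁ i j * B₂ k l := by
      intro k l
      have := congrFun (congrFun h (i, k)) (j, l)
      simpa [Matrix.kronecker_apply] using this
    rcases hA₁ i j with h0 | h1v <;> rcases hB₁ i j with g0 | g1v
    · exact hij (h0.trans g0.symm)
    · -- A₁ i j = 0, B₁ i j = 1 : B₂ = 0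
      apply hB2ne
      ext k l
      have := hentry k l
      rw [h0, g1v, zero_mul, one_mul] at this
      simpa using this.symm
    · apply hA2ne
      ext k l
      have := hentry k l
      rw [h1v, g0, zero_mul, one_mul] at this
      simpa using this
    · exact hij (h1v.trans g1v.symm)
end
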